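/- arXiv:2104.09860 — 5 statements merged into one kernel-verified Lean document; each statement's English description precedes it below -/
import Mathlib

section
/- Let X ⊆ A^ℤ and Y ⊆ B^ℤ be two-sided subshifts and let φ' : X' → Y' be a topological conjugacy. Then for every aperiodic point x ∈ X', the set xR equals the singleton {φ'(x)}, and for every aperiodic point y ∈ Y', the set Ry equals the singleton {φ'^{-1}(y)}. -/
open Set

/-- The two-sided shift map on `A^ℤ`: `(tshift x) i = x (i+1)`. -/
def tshift {A : Type*} (x : ℤ → A) : ℤ → A := fun i => x (i + 1)

/-- A two-sided point is periodic if `σ^n x = x` for some `n ≥ 1`. -/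
def TPeriodic {A : Type*} (x : ℤ → A) : Prop := ∃ n : ℕ, 1 ≤ n ∧ tshift^[n] x = x

/-- `Aper X` is the set `X'` of aperiodic points of `X`. -/
def Aper {A : Type*} (X : Set (ℤ → A)) : Set (ℤ → A) := {x ∈ X | ¬ TPeriodic x}

/-- The word `w` occurs in `x` at position `i`. -/
def OccursAt {A : Type*} (w : List A) (x : ℤ → A) (i : ℤ) : Prop :=
  ∀ j : Fin w.length, x (i + (j : ℕ)) = w.get j

/-- The word `w` occurs somewhere in `x`. -/
def OccursIn {A : Type*} (w : List A) (x : ℤ → A) : Prop := ∃ i : ℤ, OccursAt w x i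

/-- The word `w` occurs in some point of `X`. -/
def WordIn {A : Type*} (w : List A) (X : Set (ℤ → A)) : Prop := ∃ x ∈ X, OccursIn w x

/-- `X` is a (two-sided) subshift: a closed shift-invariant subset of the full shift. -/
def IsSubshift {A : Type*} [TopologicalSpace A] (X : Set (ℤ → A)) : Prop :=
  IsClosed X ∧ tshift '' X = X

/-- `X` is an SFT: it is defined by forbidding a finite set of finite words. -/
def IsSFT {A : Type*} (X : Set (ℤ → A)) : Prop :=
  ∃ F : Set (List A), F.Finite ∧ X = {x | ∀ w ∈ F, ¬ OccursIn w x}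

/-- `X` is transitive: any two words of its language can be joined by a connecting word. -/
def IsTransitiveShift {A : Type*} (X : Set (ℤ → A)) : Prop :=
  ∀ u v : List A, WordIn u X → WordIn v X → ∃ w : List A, WordIn (u ++ w ++ v) X

/-- A map between subsets of full shifts is shift-commuting (wherever the shift stays
in the domain set, which is always the case for shift-invariant sets). -/
def ShiftCommuting2 {A B : Type*} {X : Set (ℤ → A)} {Y : Set (ℤ → B)} (f : X → Y) : Prop :=
  ∀ (x : X) (hx : tshift (x : ℤ → A) ∈ X),
    (f ⟨tshift (x : ℤ → A), hx⟩ : ℤ → B) = tshift (f x : ℤ → B)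

/-- `φ : X → Y` restricts (in domain and codomain) to `φ' : X' → Y'`. -/
def RestrictsTo2 {A B : Type*} {X : Set (ℤ → A)} {Y : Set (ℤ → B)}
    (φ : X → Y) (φ' : Aper X → Aper Y) : Prop :=
  ∀ (x : ℤ → A) (hx : x ∈ Aper X), (φ ⟨x, hx.1⟩ : ℤ → B) = (φ' ⟨x, hx⟩ : ℤ → B)


/-- The relation `R ⊆ X × Y`: the closure of the graph `{(x, φ'(x)) : x ∈ X'}`
(taken in the ambient product space; for closed `X`, `Y` this coincides with the
closure in `X × Y`). -/
def graphRel {A B : Type*} [TopologicalSpace A] [TopologicalSpace B]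
    {X : Set (ℤ → A)} {Y : Set (ℤ → B)} (φ' : Aper X → Aper Y) :
    Set ((ℤ → A) × (ℤ → B)) :=
  closure {p | ∃ x : Aper X, p = ((x : ℤ → A), (φ' x : ℤ → B))}

/-- For a topological conjugacy `φ' : X' → Y'` between aperiodic parts of
two-sided subshifts, `xR = {φ'(x)}` for every aperiodic `x`, and `Ry = {φ'⁻¹(y)}` for every
aperiodic `y`. -/
theorem statement3 {A B : Type*} [Fintype A] [TopologicalSpace A] [DiscreteTopology A]
    [Fintype B] [TopologicalSpace B] [DiscreteTopology B]
    (X : Set (ℤ → A)) (Y : Set (ℤ → B))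
    (hX : IsSubshift X) (hY : IsSubshift Y)
    (φ' : Aper X ≃ₜ Aper Y) (hφ' : ShiftCommuting2 ⇑φ') :
    (∀ (x : ℤ → A) (hx : x ∈ Aper X),
      {y ∈ Y | (x, y) ∈ graphRel ⇑φ'} = {(φ' ⟨x, hx⟩ : ℤ → B)}) ∧
    (∀ (y : ℤ → B) (hy : y ∈ Aper Y),
      {x ∈ X | (x, y) ∈ graphRel ⇑φ'} = {(φ'.symm ⟨y, hy⟩ : ℤ → A)}) := by
  constructor
  · intro x hx
    ext y
    simp only [Set.mem_setOf_eq, Set.mem_singleton_iff]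
    constructor
    · rintro ⟨hyY, hR⟩
      rw [graphRel, mem_closure_iff_seq_limit] at hR
      obtain ⟨p, hp, hlim⟩ := hR
      choose u hu using hp
      have h1 : Filter.Tendsto (fun n => (u n : ℤ → A)) Filter.atTop (nhds x) := by
        have := (continuous_fst.tendsto _).comp hlim
        simpa [Function.comp_def, hu] using this
      have h1' : Filter.Tendsto u Filter.atTop (nhds (⟨x, hx⟩ : Aper X)) :=
        tendsto_subtype_rng.mpr h1
      have h2 : Filter.Tendsto (fun n => (φ' (u n) : ℤ → B)) Filter.atTop
          (nhds (φ' ⟨x, hx⟩ : ℤ → B)) :=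
        (continuous_subtype_val.comp φ'.continuous).continuousAt.tendsto.comp h1'
      have h3 : Filter.Tendsto (fun n => (φ' (u n) : ℤ → B)) Filter.atTop (nhds y) := by
        have := (continuous_snd.tendsto _).comp hlim
        simpa [Function.comp_def, hu] using this
      exact tendsto_nhds_unique h3 h2
    · rintro rfl
      refine ⟨(φ' ⟨x, hx⟩).2.1, subset_closure ⟨⟨x, hx⟩, rfl⟩⟩
  · intro y hy
    ext x
    simp only [Set.mem_setOf_eq, Set.mem_singleton_iff]
    constructor
    · rintro ⟨hxX, hR⟩
      rw [graphRel, mem_closure_iff_seq_limit] at hR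
      obtain ⟨p, hp, hlim⟩ := hR
      choose u hu using hp
      have h1 : Filter.Tendsto (fun n => (u n : ℤ → A)) Filter.atTop (nhds x) := by
        have := (continuous_fst.tendsto _).comp hlim
        simpa [Function.comp_def, hu] using this
      have h3 : Filter.Tendsto (fun n => (φ' (u n) : ℤ → B)) Filter.atTop (nhds y) := by
        have := (continuous_snd.tendsto _).comp hlim
        simpa [Function.comp_def, hu] using this
      have h3' : Filter.Tendsto (fun n => φ' (u n)) Filter.atTop
          (nhds (⟨y, hy⟩ : Aper Y)) := tendsto_subtype_rng.mpr h3
      have h4 : Filter.Tendsto (fun n => (u n : ℤ → A)) Filter.atTop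
          (nhds (φ'.symm ⟨y, hy⟩ : ℤ → A)) := by
        have := (continuous_subtype_val.comp
          φ'.symm.continuous).continuousAt.tendsto.comp h3'
        simpa [Function.comp_def] using this
      exact tendsto_nhds_unique h1 h4
    · rintro rfl
      refine ⟨(φ'.symm ⟨y, hy⟩).2.1, subset_closure ⟨φ'.symm ⟨y, hy⟩, by simp⟩⟩
end

section
/- Let X ⊆ A^ℤ and Y ⊆ B^ℤ be two-sided subshifts in each of which the aperiodic points are dense, and let φ' : X' → Y' be a topological conjugacy. If xR is a singleton for every periodic point x ∈ X and Ry is a singleton for every periodic point y ∈ Y, then there is a unique topological conjugacy φ : X → Y whose restriction to X' (with codomain restricted to Y') equals φ'. -/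
open Set

lemma tshift_injective {A : Type*} : Function.Injective (tshift (A := A)) := by
  intro x y h
  funext i
  have := congrFun h (i - 1)
  simpa [tshift] using this

lemma continuous_tshift {A : Type*} [TopologicalSpace A] : Continuous (tshift (A := A)) :=
  continuous_pi fun i => continuous_apply (i + 1)

lemma aper_tshift {A : Type*} [TopologicalSpace A] {X : Set (ℤ → A)} (hinv : tshift '' X = X)
    {x : ℤ → A} (hx : x ∈ Aper X) : tshift x ∈ Aper X := by
  refine ⟨by rw [← hinv]; exact ⟨x, hx.1, rfl⟩, ?_⟩
  rintro ⟨n, hn, hiter⟩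
  refine hx.2 ⟨n, hn, tshift_injective ?_⟩
  calc tshift (tshift^[n] x) = tshift^[n] (tshift x) := (Function.iterate_succ_apply' tshift n x).symm.trans (Function.iterate_succ_apply tshift n x)
    _ = tshift x := hiter

lemma graph_closure_aux {α β : Type*} [TopologicalSpace α] [TopologicalSpace β]
    [T2Space β] {s : Set α} {F : s → β} (hF : Continuous F) {x : α} (hx : x ∈ s) {y : β}
    (hy : (x, y) ∈ closure {p : α × β | ∃ z : s, p = ((z : α), F z)}) : y = F ⟨x, hx⟩ := by
  by_contra hne
  obtain ⟨V, W, hVo, hWo, hyV, hFW, hVW⟩ := t2_separation hne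
  have hWmem : F ⁻¹' W ∈ nhds (⟨x, hx⟩ : s) :=
    hF.continuousAt.preimage_mem_nhds (hWo.mem_nhds hFW)
  rw [nhds_subtype_eq_comap, Filter.mem_comap] at hWmem
  obtain ⟨U, hU, hUsub⟩ := hWmem
  rcases mem_closure_iff_nhds.mp hy _ (prod_mem_nhds hU (hVo.mem_nhds hyV)) with ⟨p, hpUV, z, hpz⟩
  subst hpz
  exact Set.disjoint_right.mp hVW (hUsub hpUV.1) hpUV.2

/-- If the aperiodic points are dense in the two-sided subshifts `X` and
`Y`, `φ' : X' → Y'` is a topological conjugacy, and `xR`, `Ry` are singletons for all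
periodic `x ∈ X`, `y ∈ Y`, then `φ'` extends uniquely to a topological conjugacy
`φ : X → Y`. -/
theorem statement4 {A B : Type*} [Fintype A] [TopologicalSpace A] [DiscreteTopology A]
    [Fintype B] [TopologicalSpace B] [DiscreteTopology B]
    (X : Set (ℤ → A)) (Y : Set (ℤ → B))
    (hX : IsSubshift X) (hY : IsSubshift Y)
    (hXdense : X ⊆ closure (Aper X)) (hYdense : Y ⊆ closure (Aper Y))
    (φ' : Aper X ≃ₜ Aper Y) (hφ' : ShiftCommuting2 ⇑φ')
    (hsingX : ∀ x ∈ X, TPeriodic x → ∃ y : ℤ → B, {y' ∈ Y | (x, y') ∈ graphRel ⇑φ'} = {y})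
    (hsingY : ∀ y ∈ Y, TPeriodic y → ∃ x : ℤ → A, {x' ∈ X | (x', y) ∈ graphRel ⇑φ'} = {x}) :
    ∃! φ : X ≃ₜ Y, ShiftCommuting2 ⇑φ ∧ RestrictsTo2 ⇑φ ⇑φ' := by
  classical
  set G : Set ((ℤ → A) × (ℤ → B)) :=
    {p | ∃ x : Aper X, p = ((x : ℤ → A), (φ' x : ℤ → B))} with hG
  have hGR : graphRel ⇑φ' = closure G := rfl
  -- R ⊆ X ×ˢ Y
  have hRsub : graphRel ⇑φ' ⊆ X ×ˢ Y := by
    rw [hGR]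
    refine closure_minimal ?_ (hX.1.prod hY.1)
    rintro p ⟨z, rfl⟩
    exact ⟨z.2.1, (φ' z).2.1⟩
  -- the graph, swapped, is the graph of φ'.symm
  have hGswap : Prod.swap '' G =
      {p : (ℤ → B) × (ℤ → A) | ∃ w : Aper Y, p = ((w : ℤ → B), (φ'.symm w : ℤ → A))} := by
    ext p
    constructor
    · rintro ⟨q, ⟨z, rfl⟩, rfl⟩
      exact ⟨φ' z, by simp⟩
    · rintro ⟨w, rfl⟩
      exact ⟨((φ'.symm w : ℤ → A), (w : ℤ → B)), ⟨φ'.symm w, by simp⟩, rfl⟩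
  -- uniqueness of second coordinate over aperiodic x
  have key1 : ∀ (x : ℤ → A) (hx : x ∈ Aper X) (y : ℤ → B),
      (x, y) ∈ graphRel ⇑φ' → y = (φ' ⟨x, hx⟩ : ℤ → B) := by
    intro x hx y hy
    exact graph_closure_aux (continuous_subtype_val.comp φ'.continuous) hx hy
  -- uniqueness of first coordinate over aperiodic y
  have key2 : ∀ (y : ℤ → B) (hy : y ∈ Aper Y) (x : ℤ → A),
      (x, y) ∈ graphRel ⇑φ' → x = (φ'.symm ⟨y, hy⟩ : ℤ → A) := by
    intro y hy x hxy
    have hswap : (y, x) ∈ closure (Prod.swap '' G) := by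
      have := image_closure_subset_closure_image (f := Prod.swap) continuous_swap
        (Set.mem_image_of_mem _ (hGR ▸ hxy))
      simpa using this
    rw [hGswap] at hswap
    exact graph_closure_aux (continuous_subtype_val.comp φ'.symm.continuous) hy hswap
  -- unique existence of images
  have exuniqY : ∀ x ∈ X, ∃! y, y ∈ Y ∧ (x, y) ∈ graphRel ⇑φ' := by
    intro x hx
    by_cases hper : TPeriodic x
    · obtain ⟨y, hy⟩ := hsingX x hx hper
      have hmem : y ∈ {y' | y' ∈ Y ∧ (x, y') ∈ graphRel ⇑φ'} := by rw [hy]; rfl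
      refine ⟨y, hmem, ?_⟩
      intro y' hy'
      have : y' ∈ ({y} : Set (ℤ → B)) := by rw [← hy]; exact hy'
      exact this
    · have hxa : x ∈ Aper X := ⟨hx, hper⟩
      refine ⟨(φ' ⟨x, hxa⟩ : ℤ → B), ⟨(φ' ⟨x, hxa⟩).2.1, subset_closure ⟨⟨x, hxa⟩, rfl⟩⟩, ?_⟩
      intro y' hy'
      exact key1 x hxa y' hy'.2
  have exuniqX : ∀ y ∈ Y, ∃! x, x ∈ X ∧ (x, y) ∈ graphRel ⇑φ' := by
    intro y hy
    by_cases hper : TPeriodic y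
    · obtain ⟨x, hx⟩ := hsingY y hy hper
      have hmem : x ∈ {x' | x' ∈ X ∧ (x', y) ∈ graphRel ⇑φ'} := by rw [hx]; rfl
      refine ⟨x, hmem, ?_⟩
      intro x' hx'
      have : x' ∈ ({x} : Set (ℤ → A)) := by rw [← hx]; exact hx'
      exact this
    · have hya : y ∈ Aper Y := ⟨hy, hper⟩
      refine ⟨(φ'.symm ⟨y, hya⟩ : ℤ → A),
        ⟨(φ'.symm ⟨y, hya⟩).2.1, subset_closure ⟨φ'.symm ⟨y, hya⟩, by simp⟩⟩, ?_⟩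
      intro x' hx'
      exact key2 y hya x' hx'.2
  choose f hf hfu using fun x : X => exuniqY (x : ℤ → A) x.2
  choose g hg hgu using fun y : Y => exuniqX (y : ℤ → B) y.2
  -- the equivalence
  have hgf : ∀ x : X, g ⟨f x, (hf x).1⟩ = (x : ℤ → A) :=
    fun x => (hgu ⟨f x, (hf x).1⟩ (x : ℤ → A) ⟨x.2, (hf x).2⟩).symm
  have hfg : ∀ y : Y, f ⟨g y, (hg y).1⟩ = (y : ℤ → B) :=
    fun y => (hfu ⟨g y, (hg y).1⟩ (y : ℤ → B) ⟨y.2, (hg y).2⟩).symm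
  let e : X ≃ Y :=
    { toFun := fun x => ⟨f x, (hf x).1⟩
      invFun := fun y => ⟨g y, (hg y).1⟩
      left_inv := fun x => Subtype.ext (hgf x)
      right_inv := fun y => Subtype.ext (hfg y) }
  -- continuity of f (valued in the ambient space)
  haveI : CompactSpace ((ℤ → A) × (ℤ → B)) := by infer_instance
  have hfc : Continuous fun x : X => f x := by
    rw [continuous_iff_isClosed]
    intro C hC
    have heq : (fun x : X => f x) ⁻¹' C =
        (Subtype.val : X → ℤ → A) ⁻¹' (Prod.fst '' (graphRel ⇑φ' ∩ univ ×ˢ C)) := by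
      ext x
      constructor
      · intro hx
        exact ⟨((x : ℤ → A), f x), ⟨(hf x).2, trivial, hx⟩, rfl⟩
      · rintro ⟨p, ⟨hpR, -, hpC⟩, hp1⟩
        have hp2Y : p.2 ∈ Y := (hRsub hpR).2
        have hpR' : (p.1, p.2) ∈ graphRel ⇑φ' := hpR
        rw [hp1] at hpR'
        have : p.2 = f x := hfu x p.2 ⟨hp2Y, hpR'⟩
        rwa [this] at hpC
    rw [heq]
    refine (IsCompact.isClosed ?_).preimage continuous_subtype_val
    refine IsCompact.image ?_ continuous_fst
    exact (isClosed_closure.inter (isClosed_univ.prod hC)).isCompact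
  haveI : CompactSpace X := isCompact_iff_compactSpace.mp hX.1.isCompact
  have hec : Continuous ⇑e := Continuous.subtype_mk hfc _
  let φ : X ≃ₜ Y := hec.homeoOfEquivCompactToT2 (f := e)
  have hφval : ∀ x : X, (φ x : ℤ → B) = f x := fun x => rfl
  -- characterization of φ
  have hchar : ∀ (x : X) (y : ℤ → B), y ∈ Y → ((x : ℤ → A), y) ∈ graphRel ⇑φ' →
      (φ x : ℤ → B) = y := fun x y h1 h2 => (hfu x y ⟨h1, h2⟩).symm
  -- shift invariance of R
  have hRshift : ∀ p ∈ graphRel ⇑φ', (tshift p.1, tshift p.2) ∈ graphRel ⇑φ' := by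
    intro p hp
    have hm : Continuous (Prod.map (tshift (A := A)) (tshift (A := B))) :=
      continuous_tshift.prodMap continuous_tshift
    have h1 : Prod.map tshift tshift p ∈ closure (Prod.map tshift tshift '' G) :=
      image_closure_subset_closure_image hm (Set.mem_image_of_mem _ (hGR ▸ hp))
    have h2 : Prod.map (tshift (A := A)) (tshift (A := B)) '' G ⊆ G := by
      rintro q ⟨r, ⟨z, rfl⟩, rfl⟩
      have hz' : tshift (z : ℤ → A) ∈ Aper X := aper_tshift hX.2 z.2
      refine ⟨⟨tshift (z : ℤ → A), hz'⟩, ?_⟩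
      have hc := hφ' z hz'
      exact Prod.ext rfl hc.symm
    exact (hGR ▸ (closure_mono h2 h1))
  have hshiftY : ∀ y ∈ Y, tshift y ∈ Y := by
    intro y hy; rw [← hY.2]; exact ⟨y, hy, rfl⟩
  have hφshift : ShiftCommuting2 ⇑φ := by
    intro x hx
    refine hchar ⟨tshift (x : ℤ → A), hx⟩ (tshift (φ x : ℤ → B))
      (hshiftY _ (φ x).2) ?_
    exact hRshift ((x : ℤ → A), f x) (hf x).2
  have hφrestr : RestrictsTo2 ⇑φ ⇑φ' := by
    intro x hx
    exact hchar ⟨x, hx.1⟩ (φ' ⟨x, hx⟩ : ℤ → B) (φ' ⟨x, hx⟩).2.1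
      (subset_closure ⟨⟨x, hx⟩, rfl⟩)
  refine ⟨φ, ⟨hφshift, hφrestr⟩, ?_⟩
  -- uniqueness
  intro ψ ⟨hψs, hψr⟩
  have hdense : Dense {x : X | (x : ℤ → A) ∈ Aper X} := by
    intro x
    rw [show {x : X | (x : ℤ → A) ∈ Aper X} = Subtype.val ⁻¹' Aper X from rfl, closure_subtype,
      Subtype.image_preimage_coe, inter_eq_self_of_subset_right (fun z hz => hz.1)]
    exact hXdense x.2
  have heq : (fun x : X => (ψ x : ℤ → B)) = fun x : X => (φ x : ℤ → B) := by
    refine Continuous.ext_on hdense (continuous_subtype_val.comp ψ.continuous)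
      (continuous_subtype_val.comp φ.continuous) ?_
    intro x hx
    have h1 := hψr (x : ℤ → A) hx
    have h2 := hφrestr (x : ℤ → A) hx
    simp only at h1 h2 ⊢
    rw [show (⟨(x : ℤ → A), hx.1⟩ : X) = x from Subtype.ext rfl] at h1 h2
    rw [h1, h2]
  exact Homeomorph.ext fun x => Subtype.ext (congrFun heq x)
end

section
/- Let X ⊆ A^ℤ and Y ⊆ B^ℤ be two-sided subshifts, let φ' : X' → Y' be a topological conjugacy, and let s ∈ X be a fixed point of σ. Then the set sR is a finite subshift of Y, i.e. it is finite, closed, and σ-invariant. -/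
open Set

/-!
The relation `R` is the closure of a graph invariant under `σ × σ`, so for the fixed point `s`
the section `sR` is closed and shift-invariant. If some `y ∈ sR` were aperiodic, continuity of
`φ'⁻¹` at `y` would force `s = φ'⁻¹ y`, an aperiodic point, although `σ s = s`. Hence `sR` is a
subshift consisting of periodic points, and such a subshift is finite: otherwise pigeonhole and
compactness produce two of its points that differ at `0` but agree on a whole half-line, while
two periodic sequences agreeing on a half-line are equal.
-/

open Filter Topology Function

section Shift

variable {A : Type*}

def shiftBy (d : ℤ) (x : ℤ → A) : ℤ → A := fun i => x (i + d)

@[simp]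
lemma shiftBy_apply (d : ℤ) (x : ℤ → A) (i : ℤ) : shiftBy d x i = x (i + d) := rfl

lemma shiftBy_one : (shiftBy 1 : (ℤ → A) → ℤ → A) = tshift := rfl

@[simp]
lemma shiftBy_shiftBy (d e : ℤ) (x : ℤ → A) : shiftBy d (shiftBy e x) = shiftBy (d + e) x := by
  funext i; simp [add_assoc]

@[simp]
lemma shiftBy_zero (x : ℤ → A) : shiftBy 0 x = x := by
  funext i; simp

lemma continuous_shiftBy [TopologicalSpace A] (d : ℤ) :
    Continuous (shiftBy d : (ℤ → A) → ℤ → A) :=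
  continuous_pi fun i => continuous_apply (i + d)

lemma tshift_iterate (n : ℕ) (x : ℤ → A) : tshift^[n] x = shiftBy n x := by
  induction n with
  | zero => simp
  | succ n ih => rw [iterate_succ_apply', ih, ← shiftBy_one, shiftBy_shiftBy]; push_cast; ring_nf

lemma tperiodic_iff_exists_periodic {x : ℤ → A} :
    TPeriodic x ↔ ∃ p : ℕ, 0 < p ∧ Periodic x (p : ℤ) := by
  simp only [TPeriodic, tshift_iterate, funext_iff, shiftBy_apply, Periodic, Nat.one_le_iff_ne_zero,
    Nat.pos_iff_ne_zero]

lemma TPeriodic.shiftBy {x : ℤ → A} (hx : TPeriodic x) (d : ℤ) : TPeriodic (shiftBy d x) := by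
  obtain ⟨p, hp, hper⟩ := tperiodic_iff_exists_periodic.1 hx
  exact tperiodic_iff_exists_periodic.2 ⟨p, hp, hper.add_const d⟩

lemma tperiodic_shiftBy_iff {x : ℤ → A} {d : ℤ} : TPeriodic (shiftBy d x) ↔ TPeriodic x :=
  ⟨fun h => by simpa using h.shiftBy (-d), fun h => h.shiftBy d⟩

lemma image_tshift_eq_of_mapsTo {S : Set (ℤ → A)} (h₁ : MapsTo tshift S S)
    (h₂ : MapsTo (shiftBy (-1)) S S) : tshift '' S = S :=
  (h₁.image_subset).antisymm fun y hy => ⟨shiftBy (-1) y, h₂ hy, by simp [← shiftBy_one]⟩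

lemma mapsTo_shiftBy_of_image_tshift_eq {S : Set (ℤ → A)} (hS : tshift '' S = S) (d : ℤ) :
    MapsTo (shiftBy d) S S := by
  induction d using Int.induction_on with
  | zero => exact fun x hx => by simpa using hx
  | succ d ih =>
    intro x hx
    rw [add_comm, ← shiftBy_shiftBy, shiftBy_one, ← hS]
    exact mem_image_of_mem _ (ih hx)
  | pred d ih =>
    intro x hx
    rw [← hS] at hx
    obtain ⟨x', hx', rfl⟩ := hx
    simpa [← shiftBy_one, sub_eq_add_neg, add_comm] using ih hx'

lemma mapsTo_shiftBy_aper {X : Set (ℤ → A)} (hX : tshift '' X = X) (d : ℤ) :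
    MapsTo (shiftBy d) (Aper X) (Aper X) :=
  fun _ hx => ⟨mapsTo_shiftBy_of_image_tshift_eq hX d hx.1, tperiodic_shiftBy_iff.not.2 hx.2⟩

end Shift

lemma Function.Periodic.eq_of_eqOn {α β : Type*} [Ring α] {f g : α → β} {c : α}
    (hf : Periodic f c) (hg : Periodic g c) {T : Set α} (hT : ∀ a, ∃ k : ℤ, a + k * c ∈ T)
    (h : EqOn f g T) : f = g := by
  funext a
  obtain ⟨k, hk⟩ := hT a
  rw [← hf.int_mul k a, ← hg.int_mul k a]
  exact h hk

section AgreeingPair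

variable {B : Type*}

def AgreeingPairOn (S : Set (ℤ → B)) (T : Set ℤ) : Prop :=
  ∃ a ∈ S, ∃ b ∈ S, a 0 ≠ b 0 ∧ EqOn a b T

lemma AgreeingPairOn.mono {S : Set (ℤ → B)} {T T' : Set ℤ} (h : AgreeingPairOn S T)
    (hT : T' ⊆ T) : AgreeingPairOn S T' :=
  let ⟨a, ha, b, hb, h0, hab⟩ := h
  ⟨a, ha, b, hb, h0, hab.mono hT⟩

/-- Shift the disagreement of `a` and `b` closest to the origin to position `0`. -/
lemma agreeingPairOn_of_eqOn_Icc {S : Set (ℤ → B)} (hS : tshift '' S = S) {a b : ℤ → B}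
    (ha : a ∈ S) (hb : b ∈ S) (hab : a ≠ b) {n : ℕ} (h : EqOn a b (Icc (-n) n)) :
    AgreeingPairOn S (Ico (-n) 0) ∨ AgreeingPairOn S (Ioc 0 n) := by
  obtain ⟨d, hd, hmin⟩ := (measure Int.natAbs).wf.has_min {i | a i ≠ b i} (Function.ne_iff.1 hab)
  have hclose : ∀ i, i.natAbs < d.natAbs → a i = b i := fun i hi =>
    not_not.1 fun hne => hmin i hne hi
  have hfar : n < d.natAbs := by
    by_contra hle
    exact hd (h ⟨by omega, by omega⟩)
  have hshift := mapsTo_shiftBy_of_image_tshift_eq hS d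
  rcases le_or_gt 0 d with hd0 | hd0
  · refine .inl ⟨_, hshift ha, _, hshift hb, by simpa using hd, fun i hi => hclose _ ?_⟩
    simp only [mem_Ico] at hi
    omega
  · refine .inr ⟨_, hshift ha, _, hshift hb, by simpa using hd, fun i hi => hclose _ ?_⟩
    simp only [mem_Ioc] at hi
    omega

lemma not_agreeingPairOn_of_forall_tperiodic {S : Set (ℤ → B)} (hper : ∀ y ∈ S, TPeriodic y)
    {T : Set ℤ} (hT : ∀ N : ℤ, 0 < N → ∀ i, ∃ k : ℤ, i + k * N ∈ T) : ¬ AgreeingPairOn S T := by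
  rintro ⟨a, ha, b, hb, h0, hab⟩
  obtain ⟨p, hp, hpa⟩ := tperiodic_iff_exists_periodic.1 (hper a ha)
  obtain ⟨q, hq, hqb⟩ := tperiodic_iff_exists_periodic.1 (hper b hb)
  have hqb' : Periodic b ((q : ℤ) * p) := by simpa only [mul_comm] using hqb.nat_mul p
  exact h0 (congrFun ((hpa.nat_mul q).eq_of_eqOn hqb' (hT _ (by positivity)) hab) 0)

variable [TopologicalSpace B] [DiscreteTopology B]

lemma agreeingPairOn_iUnion [Finite B] {S : Set (ℤ → B)} (hS : IsClosed S) {T : ℕ → Set ℤ}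
    (hT : Monotone T) (h : ∀ n, AgreeingPairOn S (T n)) : AgreeingPairOn S (⋃ n, T n) := by
  set C : ℕ → Set ((ℤ → B) × (ℤ → B)) := fun n =>
    {p | p.1 ∈ S ∧ p.2 ∈ S ∧ p.1 0 ≠ p.2 0 ∧ (T n).domRestrict p.1 = (T n).domRestrict p.2}
  have hcoord (i : ℤ) : Continuous fun p : (ℤ → B) × (ℤ → B) => (p.1 i, p.2 i) := by fun_prop
  have hC : ∀ n, IsClosed (C n) := fun n =>
    (hS.preimage continuous_fst).inter <| (hS.preimage continuous_snd).inter <|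
      ((isClosed_discrete {q : B × B | q.1 ≠ q.2}).preimage (hcoord 0)).inter <|
        isClosed_eq (continuous_pi fun i => (hcoord i).fst) (continuous_pi fun i => (hcoord i).snd)
  have hanti (n : ℕ) : C (n + 1) ⊆ C n := fun p hp =>
    ⟨hp.1, hp.2.1, hp.2.2.1, Set.domRestrict_eq_domRestrict_iff.2
      ((Set.domRestrict_eq_domRestrict_iff.1 hp.2.2.2).mono (hT n.le_succ))⟩
  have hne (n : ℕ) : (C n).Nonempty := by
    obtain ⟨a, ha, b, hb, h0, hab⟩ := h n
    exact ⟨(a, b), ha, hb, h0, Set.domRestrict_eq_domRestrict_iff.2 hab⟩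
  obtain ⟨p, hp⟩ := IsCompact.nonempty_iInter_of_sequence_nonempty_isCompact_isClosed C hanti hne
    (hC 0).isCompact hC
  simp only [mem_iInter] at hp
  refine ⟨p.1, (hp 0).1, p.2, (hp 0).2.1, (hp 0).2.2.1, fun i hi => ?_⟩
  obtain ⟨n, hn⟩ := mem_iUnion.1 hi
  exact Set.domRestrict_eq_domRestrict_iff.1 (hp n).2.2.2 hn

theorem IsSubshift.finite_of_forall_tperiodic [Finite B] {S : Set (ℤ → B)} (hS : IsSubshift S)
    (hper : ∀ y ∈ S, TPeriodic y) : S.Finite := by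
  by_contra hinf
  have hside (n : ℕ) : AgreeingPairOn S (Ico (-n) 0) ∨ AgreeingPairOn S (Ioc 0 n) := by
    obtain ⟨a, ha, b, hb, hab, heq⟩ := Set.Infinite.exists_ne_map_eq_of_mapsTo hinf
      (mapsTo_univ (fun y (i : Icc (-n : ℤ) n) => y i) S) finite_univ
    exact agreeingPairOn_of_eqOn_Icc hS.2 ha hb hab fun i hi => congrFun heq ⟨i, hi⟩
  by_cases hleft : ∀ n : ℕ, AgreeingPairOn S (Ico (-n) 0)
  · have hmono : Monotone fun n : ℕ => Ico (-(n : ℤ)) 0 := fun m n h =>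
      Ico_subset_Ico_left (by simpa using h)
    refine not_agreeingPairOn_of_forall_tperiodic hper (T := Iio 0)
      (fun N hN i => ⟨-(|i| + 1), ?_⟩) ((agreeingPairOn_iUnion hS.1 hmono hleft).mono ?_)
    · simp only [mem_Iio]
      nlinarith [le_abs_self i, abs_nonneg i]
    · intro i hi
      refine mem_iUnion.2 ⟨i.natAbs, ?_⟩
      simp only [mem_Iio, mem_Ico] at hi ⊢
      omega
  · obtain ⟨m, hm⟩ := not_forall.1 hleft
    have hright (n : ℕ) : AgreeingPairOn S (Ioc 0 n) :=
      ((hside (max m n)).resolve_left fun h => hm (h.mono (Ico_subset_Ico_left (by simp)))).mono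
        (Ioc_subset_Ioc_right (by simp))
    have hmono : Monotone fun n : ℕ => Ioc (0 : ℤ) n := fun m n h =>
      Ioc_subset_Ioc_right (by simpa using h)
    refine not_agreeingPairOn_of_forall_tperiodic hper (T := Ioi 0)
      (fun N hN i => ⟨|i| + 1, ?_⟩) ((agreeingPairOn_iUnion hS.1 hmono hright).mono ?_)
    · simp only [mem_Ioi]
      nlinarith [neg_abs_le i, abs_nonneg i]
    · intro i hi
      refine mem_iUnion.2 ⟨i.natAbs, ?_⟩
      simp only [mem_Ioi, mem_Ioc] at hi ⊢
      omega

end AgreeingPair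

lemma Homeomorph.eq_symm_of_mem_closure_graph {α β : Type*} [TopologicalSpace α] [T2Space α]
    [TopologicalSpace β] {s : Set α} {t : Set β} (e : s ≃ₜ t) {x : α} {y : β} (hy : y ∈ t)
    (h : (x, y) ∈ closure {p | ∃ a : s, p = ((a : α), (e a : β))}) : x = e.symm ⟨y, hy⟩ := by
  set F : s → α × β := fun a => ((a : α), (e a : β))
  set l := comap F (𝓝 (x, y))
  have : l.NeBot := comap_neBot fun t ht => by
    obtain ⟨_, hpt, a, rfl⟩ := mem_closure_iff_nhds.1 h t ht
    exact ⟨a, hpt⟩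
  have hF : Tendsto F l (𝓝 (x, y)) := tendsto_comap
  have he : Tendsto e l (𝓝 ⟨y, hy⟩) := tendsto_subtype_rng.2 ((continuous_snd.tendsto _).comp hF)
  have hsymm : Tendsto (fun a : s => (e.symm (e a) : α)) l (𝓝 (e.symm ⟨y, hy⟩ : α)) :=
    ((continuous_subtype_val.comp e.symm.continuous).tendsto _).comp he
  simp only [Homeomorph.symm_apply_apply] at hsymm
  exact tendsto_nhds_unique ((continuous_fst.tendsto _).comp hF) hsymm

section Graph

variable {A B : Type*} {X : Set (ℤ → A)} {Y : Set (ℤ → B)}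

lemma mapsTo_graphRel [TopologicalSpace A] [TopologicalSpace B] (φ' : Aper X → Aper Y) {d : ℤ}
    (hd : MapsTo (shiftBy d) (Aper X) (Aper X))
    (hcomm : ∀ x : Aper X, (φ' ⟨shiftBy d x, hd x.2⟩ : ℤ → B) = shiftBy d (φ' x)) :
    MapsTo (Prod.map (shiftBy d) (shiftBy d)) (graphRel φ') (graphRel φ') := by
  refine MapsTo.closure ?_ ((continuous_shiftBy d).prodMap (continuous_shiftBy d))
  rintro _ ⟨x, rfl⟩
  exact ⟨⟨shiftBy d x, hd x.2⟩, by simp [hcomm]⟩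

lemma ShiftCommuting2.shiftBy_neg_one (hX : tshift '' X = X) {φ' : Aper X → Aper Y}
    (hφ' : ShiftCommuting2 φ') (x : Aper X) :
    (φ' ⟨shiftBy (-1) x, mapsTo_shiftBy_aper hX (-1) x.2⟩ : ℤ → B) = shiftBy (-1) (φ' x) := by
  set x₁ : Aper X := ⟨shiftBy (-1) x, mapsTo_shiftBy_aper hX (-1) x.2⟩
  have hx : tshift (x₁ : ℤ → A) = x := by simp [x₁, ← shiftBy_one]
  have h : tshift (x₁ : ℤ → A) ∈ Aper X := hx ▸ x.2
  have hcomm := hφ' x₁ h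
  rw [show (⟨_, h⟩ : Aper X) = x from Subtype.ext hx, ← shiftBy_one] at hcomm
  simp [hcomm]

end Graph

theorem statement5_general {A B : Type*} [TopologicalSpace A] [DiscreteTopology A]
    [Fintype B] [TopologicalSpace B] [DiscreteTopology B]
    (X : Set (ℤ → A)) (Y : Set (ℤ → B))
    (hX : IsSubshift X) (hY : IsSubshift Y)
    (φ' : Aper X ≃ₜ Aper Y) (hφ' : ShiftCommuting2 ⇑φ')
    (s : ℤ → A) (hfix : tshift s = s) :
    ({y ∈ Y | (s, y) ∈ graphRel ⇑φ'}).Finite ∧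
    IsClosed {y ∈ Y | (s, y) ∈ graphRel ⇑φ'} ∧
    tshift '' {y ∈ Y | (s, y) ∈ graphRel ⇑φ'} = {y ∈ Y | (s, y) ∈ graphRel ⇑φ'} := by
  set S := {y ∈ Y | (s, y) ∈ graphRel ⇑φ'}
  have hsection (d : ℤ) (hs : shiftBy d s = s)
      (hR : MapsTo (Prod.map (shiftBy d) (shiftBy d)) (graphRel ⇑φ') (graphRel ⇑φ')) :
      MapsTo (shiftBy d) S S := fun y hy =>
    ⟨mapsTo_shiftBy_of_image_tshift_eq hY.2 d hy.1, by simpa [hs] using hR hy.2⟩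
  have hs : shiftBy (-1) s = s := by
    nth_rw 1 [← hfix]; rw [← shiftBy_one, shiftBy_shiftBy]; simp
  have hinv : tshift '' S = S := image_tshift_eq_of_mapsTo
    (hsection 1 hfix (mapsTo_graphRel _ (mapsTo_shiftBy_aper hX.2 1) fun x => hφ' x _))
    (hsection (-1) hs (mapsTo_graphRel _ _ (hφ'.shiftBy_neg_one hX.2)))
  have hclosed : IsClosed S := hY.1.inter (isClosed_closure.preimage (Continuous.prodMk_right s))
  have hper : ∀ y ∈ S, TPeriodic y := by
    rintro y ⟨hyY, hyR⟩
    by_contra hy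
    have hsy := φ'.eq_symm_of_mem_closure_graph ⟨hyY, hy⟩ hyR
    exact (φ'.symm ⟨y, hyY, hy⟩).2.2 (hsy ▸ (⟨1, le_rfl, hfix⟩ : TPeriodic s))
  exact ⟨IsSubshift.finite_of_forall_tperiodic ⟨hclosed, hinv⟩ hper, hclosed, hinv⟩

/-- If `s ∈ X` is a fixed point of the shift, then `sR` is a finite
subshift of `Y`: finite, closed and shift-invariant. -/
theorem statement5 {A B : Type*} [Fintype A] [TopologicalSpace A] [DiscreteTopology A]
    [Fintype B] [TopologicalSpace B] [DiscreteTopology B]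
    (X : Set (ℤ → A)) (Y : Set (ℤ → B))
    (hX : IsSubshift X) (hY : IsSubshift Y)
    (φ' : Aper X ≃ₜ Aper Y) (hφ' : ShiftCommuting2 ⇑φ')
    (s : ℤ → A) (hs : s ∈ X) (hfix : tshift s = s) :
    ({y ∈ Y | (s, y) ∈ graphRel ⇑φ'}).Finite ∧
    IsClosed {y ∈ Y | (s, y) ∈ graphRel ⇑φ'} ∧
    tshift '' {y ∈ Y | (s, y) ∈ graphRel ⇑φ'} = {y ∈ Y | (s, y) ∈ graphRel ⇑φ'} :=
  statement5_general X Y hX hY φ' hφ' s hfix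
end

section
/- Let Z ⊆ A^ℤ be a two-sided subshift in which every periodic point is synchronizing and such that neither Z_ℕ nor Z_{-ℕ} has an isolated periodic point, let X = Z_ℕ, and let Y ⊆ B^ℕ be any one-sided subshift. Then every continuous shift-commuting map φ' : X' → Y' is the restriction (in both domain and codomain) of a continuous map φ : X → Y with φ ∘ σ = σ ∘ φ, and this extension φ is unique. -/
/-!
Aperiodic points are dense in `X = Z_ℕ` (Baire: the periodic points are countable and none of them
is isolated), so `φ'` has at most one continuous extension, and one exists as soon as `φ'` has a
limit at every periodic point `p`. To get it, glue along the synchronizing orbit of `p`: if `y` is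
aperiodic with `σ^g y = p`, then for aperiodic `u` near `p` the point `prepend g y u` lies in `X`,
is close to `y`, and `φ' u = σ^g φ' (prepend g y u)`, so `φ' u → σ^g (φ' y)`. Such a `y` exists because the
left half of the orbit of `p` is not isolated in `Z_{-ℕ}`: a nearby different left tail, glued to
the orbit, creates a left defect. The same limit with `y = x`, `g = 1` shows that the extension
commutes with `σ`.
-/

open Set

/-- The one-sided shift map on `A^ℕ`. -/
def oshift {A : Type*} (x : ℕ → A) : ℕ → A := fun i => x (i + 1)

/-- A one-sided point is periodic if `σ^n x = x` for some `n ≥ 1`. -/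
def OPeriodic {A : Type*} (x : ℕ → A) : Prop := ∃ n : ℕ, 1 ≤ n ∧ oshift^[n] x = x

/-- `X_ℕ`: the set of right tails `(x_i)_{i ≥ 0}` of points of `X`. -/
def posRay {A : Type*} (X : Set (ℤ → A)) : Set (ℕ → A) :=
  (fun x : ℤ → A => fun n : ℕ => x (n : ℤ)) '' X

/-- `X_{-ℕ}`: the set of left tails `(x_{-i})_{i ≥ 0}` of points of `X`, as a
one-sided system (its shift, shifting in the other direction, becomes `oshift`). -/
def negRay {A : Type*} (X : Set (ℤ → A)) : Set (ℕ → A) :=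
  (fun x : ℤ → A => fun n : ℕ => x (-(n : ℤ))) '' X

/-- A one-sided system `S` has an isolated periodic point. -/
def HasIsolatedPeriodicPt {A : Type*} [TopologicalSpace A] (S : Set (ℕ → A)) : Prop :=
  ∃ x ∈ S, OPeriodic x ∧ ∃ U : Set (ℕ → A), IsOpen U ∧ U ∩ S = {x}

/-- The point `s` is synchronizing in `X`: for some `ℓ`, any two points of `X` agreeing
with `s` on `[-ℓ, ℓ]` can be glued along `s` there. -/
def Synchronizing {A : Type*} (X : Set (ℤ → A)) (s : ℤ → A) : Prop :=
  ∃ l : ℕ, ∀ x ∈ X, ∀ y ∈ X,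
    (∀ i : ℤ, -(l : ℤ) ≤ i ∧ i ≤ (l : ℤ) → x i = s i) →
    (∀ i : ℤ, -(l : ℤ) ≤ i ∧ i ≤ (l : ℤ) → y i = s i) →
    (fun i : ℤ => if i < -(l : ℤ) then x i else if i ≤ (l : ℤ) then s i else y i) ∈ X

/-- `Aper1 X` is the set `X'` of aperiodic points of a one-sided system `X`. -/
def Aper1 {A : Type*} (X : Set (ℕ → A)) : Set (ℕ → A) := {x ∈ X | ¬ OPeriodic x}

/-- A map between subsets of one-sided full shifts is shift-commuting: whenever both `x`
and `oshift x` lie in the domain set, the map intertwines the shifts there. -/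
def ShiftCommuting1 {A B : Type*} {X : Set (ℕ → A)} {Y : Set (ℕ → B)} (f : X → Y) : Prop :=
  ∀ (x : X) (hx : oshift (x : ℕ → A) ∈ X),
    (f ⟨oshift (x : ℕ → A), hx⟩ : ℕ → B) = oshift (f x : ℕ → B)

/-- `φ : X → Y` restricts (in domain and codomain) to `φ' : X' → Y'` (one-sided). -/
def RestrictsTo1 {A B : Type*} {X : Set (ℕ → A)} {Y : Set (ℕ → B)}
    (φ : X → Y) (φ' : Aper1 X → Aper1 Y) : Prop :=
  ∀ (x : ℕ → A) (hx : x ∈ Aper1 X), (φ ⟨x, hx.1⟩ : ℕ → B) = (φ' ⟨x, hx⟩ : ℕ → B)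

/-- `Y` is a one-sided subshift: closed and invariant under the one-sided shift. -/
def IsSubshift1 {A : Type*} [TopologicalSpace A] (Y : Set (ℕ → A)) : Prop :=
  IsClosed Y ∧ oshift '' Y ⊆ Y

open Filter Topology Function

section OneSided

variable {A : Type*}

lemma oshift_iterate_apply (m : ℕ) (x : ℕ → A) (i : ℕ) : oshift^[m] x i = x (i + m) := by
  induction m generalizing x with
  | zero => rfl
  | succ m ih => rw [iterate_succ_apply, ih, oshift, add_assoc]

lemma continuous_oshift [TopologicalSpace A] : Continuous (oshift : (ℕ → A) → ℕ → A) :=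
  continuous_pi fun i => continuous_apply (i + 1)

lemma apply_add_mul_of_iterate_oshift {x : ℕ → A} {n : ℕ} (h : oshift^[n] x = x) (i k : ℕ) :
    x (i + n * k) = x i := by
  rw [← oshift_iterate_apply (n * k) x i, (IsPeriodicPt.mul_const h k).eq]

lemma apply_mod_of_iterate_oshift {x : ℕ → A} {n : ℕ} (h : oshift^[n] x = x) (i : ℕ) :
    x (i % n) = x i := by
  rw [← apply_add_mul_of_iterate_oshift h (i % n) (i / n), Nat.mod_add_div]

lemma OPeriodic.iterate_oshift {x : ℕ → A} (h : OPeriodic x) (m : ℕ) :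
    OPeriodic (oshift^[m] x) :=
  let ⟨n, hn, hx⟩ := h
  ⟨n, hn, IsPeriodicPt.apply_iterate hx m⟩

lemma countable_setOf_oPeriodic [Finite A] : {x : ℕ → A | OPeriodic x}.Countable := by
  refine (countable_iUnion fun n : ℕ => countable_range
    fun w : Fin (n + 1) → A => fun i => w ⟨i % (n + 1), Nat.mod_lt _ n.succ_pos⟩).mono ?_
  rintro x ⟨n, hn, hx⟩
  obtain ⟨n, rfl⟩ := Nat.exists_eq_add_of_le' hn
  exact mem_iUnion.2 ⟨n, fun j => x j, funext fun i => apply_mod_of_iterate_oshift hx i⟩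

def prepend (g : ℕ) (y u : ℕ → A) : ℕ → A := fun i => if i < g then y i else u (i - g)

lemma iterate_oshift_prepend (g : ℕ) (y u : ℕ → A) : oshift^[g] (prepend g y u) = u := by
  funext i
  simp [oshift_iterate_apply, prepend]

lemma prepend_iterate_oshift (g : ℕ) (y : ℕ → A) : prepend g y (oshift^[g] y) = y := by
  funext i
  by_cases h : i < g
  · simp [prepend, h]
  · simp [prepend, h, oshift_iterate_apply, Nat.sub_add_cancel (not_lt.1 h)]

lemma continuous_prepend [TopologicalSpace A] (g : ℕ) (y : ℕ → A) : Continuous (prepend g y) :=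
  continuous_pi fun i => by
    by_cases h : i < g
    · simpa [prepend, h] using continuous_const
    · simpa [prepend, h] using continuous_apply (i - g)

lemma eventually_forall_lt_eq [TopologicalSpace A] [DiscreteTopology A] (x : ℕ → A) (N : ℕ) :
    ∀ᶠ u in 𝓝 x, ∀ i < N, u i = x i :=
  (PiNat.isOpen_cylinder (fun _ => A) x N).mem_nhds (PiNat.self_mem_cylinder x N)

end OneSided

lemma dense_compl_of_countable_of_not_isOpen_singleton {X : Type*} [TopologicalSpace X]
    [BaireSpace X] [T1Space X] {P : Set X} (hP : P.Countable) (h : ∀ c ∈ P, ¬ IsOpen {c}) :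
    Dense Pᶜ := by
  rw [← interior_eq_empty_iff_dense_compl]
  by_contra hne
  refine not_isMeagre_of_isOpen isOpen_interior (nonempty_iff_ne_empty.2 hne)
    (IsMeagre.mono interior_subset ?_)
  rw [← biUnion_of_singleton P]
  refine isMeagre_biUnion hP fun c hc => IsNowhereDense.isMeagre ?_
  rw [IsNowhereDense, closure_singleton]
  exact (subset_singleton_iff_eq.1 interior_subset).resolve_right
    fun hint => h c hc (hint ▸ isOpen_interior)

section Density

variable {A : Type*} [TopologicalSpace A] [DiscreteTopology A]

lemma subset_closure_aper1 [Finite A] {S : Set (ℕ → A)} (hS : IsClosed S)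
    (h : ¬ HasIsolatedPeriodicPt S) : S ⊆ closure (Aper1 S) := by
  have : CompactSpace S := isCompact_iff_compactSpace.1 hS.isCompact
  have hdense : Dense {x : S | OPeriodic (x : ℕ → A)}ᶜ := by
    refine dense_compl_of_countable_of_not_isOpen_singleton
      (countable_setOf_oPeriodic.preimage Subtype.val_injective) fun c hc hopen => h ?_
    obtain ⟨U, hU, hUc⟩ := isOpen_induced_iff.1 hopen
    refine ⟨c, c.2, hc, U, hU, ?_⟩
    ext x
    refine ⟨fun ⟨hxU, hxS⟩ => ?_, ?_⟩
    · have : (⟨x, hxS⟩ : S) ∈ ({c} : Set S) := by rw [← hUc]; exact hxU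
      exact congrArg Subtype.val this
    · rintro rfl
      exact ⟨(hUc.symm ▸ rfl : c ∈ Subtype.val ⁻¹' U), c.2⟩
  convert Subtype.dense_iff.1 hdense
  ext x
  exact ⟨fun ⟨hxS, hx⟩ => ⟨⟨x, hxS⟩, hx, rfl⟩, by rintro ⟨y, hy, rfl⟩; exact ⟨y.2, hy⟩⟩

lemma exists_ne_of_not_hasIsolatedPeriodicPt {S : Set (ℕ → A)}
    (h : ¬ HasIsolatedPeriodicPt S) {x : ℕ → A} (hx : x ∈ S) (hper : OPeriodic x) (N : ℕ) :
    ∃ y ∈ S, ∃ k, N ≤ k ∧ y k ≠ x k ∧ ∀ i < N, y i = x i := by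
  have hU := PiNat.isOpen_cylinder (fun _ => A) x N
  obtain ⟨y, ⟨hyN, hyS⟩, hyx⟩ : ∃ y ∈ PiNat.cylinder x N ∩ S, y ≠ x := by
    by_contra! hall
    exact h ⟨x, hx, hper, _, hU, eq_singleton_iff_unique_mem.2
      ⟨⟨PiNat.self_mem_cylinder x N, hx⟩, hall⟩⟩
  obtain ⟨k, hk⟩ := Function.ne_iff.1 hyx
  exact ⟨y, hyS, k, not_lt.1 fun hkN => hk (PiNat.mem_cylinder_iff.1 hyN k hkN), hk,
    PiNat.mem_cylinder_iff.1 hyN⟩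

end Density

lemma ShiftCommuting1.iterate_apply {A B : Type*} {X : Set (ℕ → A)} {Y : Set (ℕ → B)}
    {φ' : Aper1 X → Aper1 Y} (hφ' : ShiftCommuting1 φ') (hX : MapsTo oshift X X)
    (x : Aper1 X) (g : ℕ) (hg : oshift^[g] (x : ℕ → A) ∈ Aper1 X) :
    (φ' ⟨_, hg⟩ : ℕ → B) = oshift^[g] (φ' x : ℕ → B) := by
  induction g with
  | zero => rfl
  | succ g ih =>
    have hg' : oshift^[g] (x : ℕ → A) ∈ Aper1 X :=
      ⟨hX.iterate g x.2.1, fun h => hg.2 (by simpa [iterate_succ_apply'] using h.iterate_oshift 1)⟩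
    have hσ : oshift (oshift^[g] (x : ℕ → A)) ∈ Aper1 X := by
      rw [iterate_succ_apply'] at hg; exact hg
    calc (φ' ⟨_, hg⟩ : ℕ → B) = φ' ⟨oshift (oshift^[g] (x : ℕ → A)), hσ⟩ :=
          congrArg (fun v => (φ' v : ℕ → B)) (Subtype.ext (iterate_succ_apply' _ _ _))
      _ = oshift (φ' ⟨_, hg'⟩ : ℕ → B) := hφ' ⟨_, hg'⟩ hσ
      _ = oshift^[g + 1] (φ' x : ℕ → B) := by rw [ih hg', iterate_succ_apply']

section Extension

variable {A B : Type*} [TopologicalSpace A] [TopologicalSpace B]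
  {X : Set (ℕ → A)} {Y : Set (ℕ → B)} {φ' : Aper1 X → Aper1 Y}

lemma tendsto_of_eventually_prepend_mem (hX : MapsTo oshift X X) (hcont : Continuous φ')
    (hφ' : ShiftCommuting1 φ') {y : Aper1 X} {g : ℕ} {p : ℕ → A}
    (hy : oshift^[g] (y : ℕ → A) = p) (hprep : ∀ᶠ u in 𝓝 p, u ∈ X → prepend g y u ∈ X) :
    Tendsto (fun u : Aper1 X => (φ' u : ℕ → B)) (comap (↑) (𝓝 p))
      (𝓝 (oshift^[g] (φ' y : ℕ → B))) := by
  have hy' : Tendsto (fun v : Aper1 X => oshift^[g] (φ' v : ℕ → B)) (comap (↑) (𝓝 (y : ℕ → A)))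
      (𝓝 (oshift^[g] (φ' y : ℕ → B))) := by
    rw [← nhds_subtype]
    exact ((continuous_oshift.iterate g).comp (continuous_subtype_val.comp hcont)).tendsto y
  have hprep_y : Tendsto (prepend g y) (𝓝 p) (𝓝 (y : ℕ → A)) := by
    simpa [← hy, prepend_iterate_oshift] using (continuous_prepend g (y : ℕ → A)).tendsto p
  intro V hV
  obtain ⟨t, ht, hts⟩ := mem_comap.1 (hy' hV)
  refine mem_comap.2 ⟨_, inter_mem hprep (hprep_y ht), fun u ⟨huX, hut⟩ => ?_⟩
  have hv : oshift^[g] (prepend g y u) ∈ Aper1 X := by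
    rw [iterate_oshift_prepend]; exact u.2
  have hv' : prepend g y u ∈ Aper1 X :=
    ⟨huX u.2.1, fun h => u.2.2 (by simpa [iterate_oshift_prepend] using h.iterate_oshift g)⟩
  have := hts (show (⟨_, hv'⟩ : Aper1 X) ∈ Subtype.val ⁻¹' t from hut)
  rw [mem_preimage, ← hφ'.iterate_apply hX ⟨_, hv'⟩ g hv] at this
  simpa [iterate_oshift_prepend] using this

lemma existsUnique_extension [T3Space B] (hY : IsClosed Y) (hX : MapsTo oshift X X)
    (hdense : X ⊆ closure (Aper1 X)) (hcont : Continuous φ')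
    (hlim : ∀ x ∈ X, ∃ c, Tendsto (fun u : Aper1 X => (φ' u : ℕ → B)) (comap (↑) (𝓝 x)) (𝓝 c))
    (hcomm : ∀ x : Aper1 X, Tendsto (fun u : Aper1 X => (φ' u : ℕ → B))
      (comap (↑) (𝓝 (oshift (x : ℕ → A)))) (𝓝 (oshift (φ' x : ℕ → B)))) :
    ∃! φ : X → Y, Continuous φ ∧ ShiftCommuting1 φ ∧ RestrictsTo1 φ φ' := by
  have hsub : Aper1 X ⊆ X := fun x hx => hx.1
  have he : IsDenseInducing (inclusion hsub) :=
    ⟨(IsEmbedding.inclusion hsub).isInducing, (denseRange_inclusion_iff hsub).2 hdense⟩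
  have hcomap (x : X) : comap (inclusion hsub) (𝓝 x) = comap (↑) (𝓝 (x : ℕ → A)) := by
    rw [nhds_subtype, comap_comap]; rfl
  set F := he.extend fun u => (φ' u : ℕ → B)
  have hF (x : X) : Tendsto (fun u => (φ' u : ℕ → B)) (comap (inclusion hsub) (𝓝 x)) (𝓝 (F x)) := by
    obtain ⟨c, hc⟩ := hlim x x.2
    rw [← hcomap] at hc
    rwa [show F x = c from he.extend_eq_of_tendsto hc]
  have hFY (x : X) : F x ∈ Y :=
    haveI := he.comap_nhds_neBot x
    hY.mem_of_tendsto (hF x) (Eventually.of_forall fun u => (φ' u).2.1)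
  have hFc : Continuous F := he.continuous_extend fun x => ⟨_, hF x⟩
  have hFφ' (u : Aper1 X) : F (inclusion hsub u) = φ' u :=
    he.extend_eq (continuous_subtype_val.comp hcont) u
  refine ⟨fun x => ⟨F x, hFY x⟩, ⟨hFc.subtype_mk _, ?_, fun x hx => hFφ' ⟨x, hx⟩⟩, ?_⟩
  · have hσ : Continuous fun x : X => (⟨oshift x, hX x.2⟩ : X) :=
      (continuous_oshift.comp continuous_subtype_val).subtype_mk _
    have hFσ : (F ∘ fun x : X => (⟨oshift x, hX x.2⟩ : X)) = oshift ∘ F :=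
      he.dense.equalizer (hFc.comp hσ) (continuous_oshift.comp hFc) <| funext fun u =>
        (he.extend_eq_of_tendsto (by rw [hcomap]; exact hcomm u)).trans
          (congrArg oshift (hFφ' u).symm)
    exact fun x _ => congrFun hFσ x
  · rintro ψ ⟨hψc, -, hψ⟩
    have hFψ : F = fun x => (ψ x : ℕ → B) :=
      he.extend_unique (fun u => hψ u u.2) (continuous_subtype_val.comp hψc)
    exact funext fun x => Subtype.ext (congrFun hFψ x).symm

end Extension

section TwoSided

variable {A : Type*} {Z : Set (ℤ → A)}

lemma tshift_iterate_apply (m : ℕ) (x : ℤ → A) (i : ℤ) : tshift^[m] x i = x (i + m) := by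
  induction m generalizing x with
  | zero => simp
  | succ m ih => rw [iterate_succ_apply, ih, tshift]; push_cast; ring_nf

lemma IsSubshift.shift_mem [TopologicalSpace A] (hZ : IsSubshift Z) {x : ℤ → A} (hx : x ∈ Z)
    (k : ℤ) : (fun i => x (i + k)) ∈ Z := by
  induction k using Int.induction_on generalizing x with
  | zero => simpa using hx
  | succ k ih =>
    convert hZ.2.subset (mem_image_of_mem _ (ih hx)) using 1
    funext i
    simp only [tshift]
    ring_nf
  | pred k ih =>
    obtain ⟨y, hy, hyx⟩ := hZ.2.symm.subset (ih hx)
    convert hy using 1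
    funext i
    have := congrFun hyx (i - 1)
    simp only [tshift, sub_add_cancel] at this
    rw [this]
    congr 1
    ring

lemma shift_mem_posRay [TopologicalSpace A] (hZ : IsSubshift Z) {z : ℤ → A} (hz : z ∈ Z)
    (k : ℤ) : (fun i : ℕ => z (i + k)) ∈ posRay Z :=
  ⟨_, hZ.shift_mem hz k, rfl⟩

lemma mapsTo_oshift_posRay [TopologicalSpace A] (hZ : IsSubshift Z) :
    MapsTo oshift (posRay Z) (posRay Z) := by
  rintro _ ⟨z, hz, rfl⟩
  convert shift_mem_posRay hZ hz 1 using 1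
  funext i
  simp [oshift]

lemma isClosed_posRay [TopologicalSpace A] [CompactSpace A] [T2Space A] (hZ : IsClosed Z) :
    IsClosed (posRay Z) :=
  (hZ.isCompact.image (continuous_pi fun n : ℕ => continuous_apply (n : ℤ))).isClosed

def periodicExt (p : ℕ → A) (n : ℕ) : ℤ → A := fun i => p (i % n).toNat

lemma periodicExt_add_mul (p : ℕ → A) (n : ℕ) (i m : ℤ) :
    periodicExt p n (i + n * m) = periodicExt p n i := by
  simp [periodicExt, Int.add_mul_emod_self_left]

lemma periodicExt_natCast {p : ℕ → A} {n : ℕ} (hp : oshift^[n] p = p) (i : ℕ) :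
    periodicExt p n i = p i := by
  simp only [periodicExt, ← Int.natCast_mod, Int.toNat_natCast, apply_mod_of_iterate_oshift hp]

lemma tPeriodic_periodicExt (p : ℕ → A) {n : ℕ} (hn : 1 ≤ n) : TPeriodic (periodicExt p n) :=
  ⟨n, hn, funext fun i => by simpa [tshift_iterate_apply] using periodicExt_add_mul p n i 1⟩

lemma periodicExt_mem [TopologicalSpace A] (hZ : IsSubshift Z)
    {p : ℕ → A} (hp : p ∈ posRay Z) {n : ℕ} (hn : 1 ≤ n) (hpn : oshift^[n] p = p) :
    periodicExt p n ∈ Z := by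
  obtain ⟨z, hz, rfl⟩ := hp
  rw [← hZ.1.closure_eq]
  refine mem_closure_of_tendsto (b := atTop)
    (tendsto_pi_nhds.2 fun i => tendsto_nhds_of_eventually_eq ?_)
    (Eventually.of_forall fun R : ℕ => hZ.shift_mem hz (n * R))
  filter_upwards [eventually_ge_atTop i.natAbs] with R hR
  obtain ⟨j, hj⟩ : ∃ j : ℕ, i + n * R = j := ⟨(i + n * R).toNat, by
    have : (R : ℤ) ≤ n * R := le_mul_of_one_le_left (by positivity) (by exact_mod_cast hn)
    omega⟩
  rw [hj, ← periodicExt_add_mul _ n i R, hj, periodicExt_natCast hpn]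

end TwoSided

section Gluing

variable {A : Type*} [TopologicalSpace A] {Z : Set (ℤ → A)}

lemma Synchronizing.exists_glue {s : ℤ → A} (hs : Synchronizing Z s) (hZ : IsSubshift Z) :
    ∃ l : ℕ, ∀ c : ℤ, (∀ i, s (i + c) = s i) → ∀ x ∈ Z, ∀ y ∈ Z,
      (∀ i, c - l ≤ i → i ≤ c + l → x i = s i) → (∀ i, c - l ≤ i → i ≤ c + l → y i = s i) →
      ∃ w ∈ Z, (∀ i ≤ c + l, w i = x i) ∧ ∀ i, c - l ≤ i → w i = y i := by
  obtain ⟨l, hl⟩ := hs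
  refine ⟨l, fun c hc x hx y hy hxs hys => ?_⟩
  have hw := hl _ (hZ.shift_mem hx c) _ (hZ.shift_mem hy c)
    (fun i hi => by rw [hxs _ (by omega) (by omega), hc])
    (fun i hi => by rw [hys _ (by omega) (by omega), hc])
  refine ⟨_, hZ.shift_mem hw (-c), fun i hi => ?_, fun i hi => ?_⟩
  all_goals
    simp only [neg_add_cancel_right]
    split_ifs with h₁ h₂
  · rfl
  · rw [hxs _ (by omega) (by omega), ← hc (i + -c), neg_add_cancel_right]
  · omega
  · omega
  · rw [hys _ (by omega) (by omega), ← hc (i + -c), neg_add_cancel_right]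
  · rfl

end Gluing

section Prepend

variable {A : Type*} [TopologicalSpace A] [DiscreteTopology A] {Z : Set (ℤ → A)}

lemma eventually_prepend_mem_posRay (hZ : IsSubshift Z)
    (hsync : ∀ s ∈ Z, TPeriodic s → Synchronizing Z s) {p : ℕ → A} (hp : p ∈ posRay Z)
    (hper : OPeriodic p) :
    ∀ᶠ u in 𝓝 p, u ∈ posRay Z → ∀ g (y : ℕ → A), y ∈ posRay Z → oshift^[g] y = p →
      prepend g y u ∈ posRay Z := by
  obtain ⟨n, hn, hpn⟩ := hper
  set s := periodicExt p n
  have hsZ : s ∈ Z := periodicExt_mem hZ hp hn hpn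
  obtain ⟨l, hl⟩ := (hsync s hsZ (tPeriodic_periodicExt p hn)).exists_glue hZ
  have hsp : ∀ j : ℕ, s j = p j := periodicExt_natCast hpn
  obtain ⟨m, hsm, hlm⟩ : ∃ m : ℕ, (∀ i : ℤ, s (i + m) = s i) ∧ l + 1 ≤ m :=
    ⟨n * (l + 1), fun i => by exact_mod_cast periodicExt_add_mul p n i (l + 1),
      Nat.le_mul_of_pos_left _ hn⟩
  filter_upwards [eventually_forall_lt_eq p (m + l + 1)]
    with u hu ⟨ut, hut, hutu⟩ g y ⟨yt, hyt, hyty⟩ hyp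
  have hyp' (j : ℕ) : yt (j + g) = p j := by
    rw [← hyp, oshift_iterate_apply, ← hyty]; push_cast; rfl
  have hup (j : ℕ) (hj : j < m + l + 1) : ut j = p j := by
    rw [← hu j hj, ← hutu]
  obtain ⟨w, hw, hwy, hwu⟩ := hl m hsm (fun i => yt (i + g)) (hZ.shift_mem hyt g) ut hut
    (fun i hi _ => by lift i to ℕ using (by omega); rw [hyp', hsp])
    (fun i hi hi' => by lift i to ℕ using (by omega); rw [hup i (by omega), hsp])
  refine ⟨fun i => w (i + -g), hZ.shift_mem hw (-g), funext fun i => ?_⟩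
  simp only [prepend]
  split_ifs with hig
  · rw [hwy _ (by omega), neg_add_cancel_right, ← hyty]
  · obtain ⟨j, rfl⟩ := Nat.exists_eq_add_of_le (not_lt.1 hig)
    have hj : ((g + j : ℕ) : ℤ) + -g = j := by push_cast; ring
    rw [hj, Nat.add_sub_cancel_left, ← hutu]
    show w j = ut j
    by_cases hjl : (m : ℤ) - l ≤ j
    · exact hwu _ hjl
    · rw [hwy _ (by omega), hyp', hup j (by omega)]

end Prepend

section LeftDefect

variable {A : Type*} [TopologicalSpace A] [DiscreteTopology A] {Z : Set (ℤ → A)}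

lemma exists_aper1_iterate_oshift_eq (hZ : IsSubshift Z)
    (hsync : ∀ s ∈ Z, TPeriodic s → Synchronizing Z s) (h2 : ¬ HasIsolatedPeriodicPt (negRay Z))
    {p : ℕ → A} (hp : p ∈ posRay Z) (hper : OPeriodic p) :
    ∃ y ∈ Aper1 (posRay Z), ∃ g, oshift^[g] y = p := by
  obtain ⟨n, hn, hpn⟩ := hper
  set s := periodicExt p n
  have hsZ : s ∈ Z := periodicExt_mem hZ hp hn hpn
  obtain ⟨l, hl⟩ := (hsync s hsZ (tPeriodic_periodicExt p hn)).exists_glue hZ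
  obtain ⟨m, hsm, hlm⟩ : ∃ m : ℕ, (∀ i : ℤ, s (i + -m) = s i) ∧ l + 1 ≤ m :=
    ⟨n * (l + 1), fun i => by convert periodicExt_add_mul p n i (-(l + 1)) using 2; push_cast; ring,
      Nat.le_mul_of_pos_left _ hn⟩
  have hνper : OPeriodic fun i : ℕ => s (-i) := ⟨n, hn, funext fun i => by
    rw [oshift_iterate_apply]; convert periodicExt_add_mul p n (-i) (-1) using 2; push_cast; ring⟩
  obtain ⟨_, ⟨v, hv, rfl⟩, k, hk, hvk, hvs⟩ :=
    exists_ne_of_not_hasIsolatedPeriodicPt h2 ⟨s, hsZ, rfl⟩ hνper (m + l + 1)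
  obtain ⟨w, hw, hwv, hws⟩ := hl (-m) hsm v hv s hsZ (fun i hi hi' => by
      obtain ⟨j, rfl⟩ : ∃ j : ℕ, i = -j := ⟨i.natAbs, by omega⟩
      exact hvs j (by omega))
    fun _ _ _ => rfl
  refine ⟨fun i : ℕ => w (i + -k), ⟨shift_mem_posRay hZ hw _, ?_⟩, k, ?_⟩
  · rintro ⟨q, hq, hqy⟩
    have hkq : (k : ℤ) ≤ q * (n * k) := by
      rw [← mul_assoc]; exact_mod_cast Nat.le_mul_of_pos_left k (Nat.mul_pos hq hn)
    have hqk := apply_add_mul_of_iterate_oshift hqy 0 (n * k)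
    simp only [Nat.cast_mul, Nat.cast_zero, zero_add] at hqk
    apply hvk
    show v (-k) = s (-k)
    rw [← hwv _ (by omega), ← hqk, hws _ (by omega)]
    convert periodicExt_add_mul p n (-k) (q * k) using 2
    ring
  · funext i
    rw [oshift_iterate_apply]
    simp only [Nat.cast_add, add_neg_cancel_right]
    rw [hws _ (by omega)]
    exact periodicExt_natCast hpn i

end LeftDefect

theorem statement8_general {A B : Type*} [Fintype A] [TopologicalSpace A] [DiscreteTopology A]
    [TopologicalSpace B] [DiscreteTopology B]
    (Z : Set (ℤ → A)) (hZ : IsSubshift Z)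
    (hsync : ∀ s ∈ Z, TPeriodic s → Synchronizing Z s)
    (h1 : ¬ HasIsolatedPeriodicPt (posRay Z)) (h2 : ¬ HasIsolatedPeriodicPt (negRay Z))
    (X : Set (ℕ → A)) (hX : X = posRay Z)
    (Y : Set (ℕ → B)) (hY : IsSubshift1 Y)
    (φ' : Aper1 X → Aper1 Y) (hcont : Continuous φ') (hφ' : ShiftCommuting1 φ') :
    ∃! φ : X → Y, Continuous φ ∧ ShiftCommuting1 φ ∧ RestrictsTo1 φ φ' := by
  subst hX
  have hσ := mapsTo_oshift_posRay hZ
  have hlim_per {p : ℕ → A} (hp : p ∈ posRay Z) (hper : OPeriodic p) (y : Aper1 (posRay Z))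
      (g : ℕ) (hy : oshift^[g] (y : ℕ → A) = p) :=
    tendsto_of_eventually_prepend_mem hσ hcont hφ' hy
      ((eventually_prepend_mem_posRay hZ hsync hp hper).mono fun u hu huX => hu huX g y y.2.1 hy)
  have hlim_aper (x : Aper1 (posRay Z)) :
      Tendsto (fun u : Aper1 (posRay Z) => (φ' u : ℕ → B)) (comap (↑) (𝓝 (x : ℕ → A)))
        (𝓝 (φ' x)) := by
    rw [← nhds_subtype]
    exact (continuous_subtype_val.comp hcont).tendsto x
  refine existsUnique_extension hY.1 hσ (subset_closure_aper1 (isClosed_posRay hZ.1) h1) hcont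
    (fun x hx => ?_) fun x => ?_
  · by_cases hxp : OPeriodic x
    · obtain ⟨y, hy, g, hyx⟩ := exists_aper1_iterate_oshift_eq hZ hsync h2 hx hxp
      exact ⟨_, hlim_per hx hxp ⟨y, hy⟩ g hyx⟩
    · exact ⟨_, hlim_aper ⟨x, hx, hxp⟩⟩
  · by_cases hxp : OPeriodic (oshift (x : ℕ → A))
    · exact hlim_per (hσ x.2.1) hxp x 1 rfl
    · rw [← hφ' x ⟨hσ x.2.1, hxp⟩]
      exact hlim_aper ⟨_, hσ x.2.1, hxp⟩

/-- Let `Z` be a two-sided subshift in which every periodic point is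
synchronizing and whose one-sided systems `Z_ℕ`, `Z_{-ℕ}` have no isolated periodic
points, and let `X = Z_ℕ`. Then every continuous shift-commuting map `φ' : X' → Y'` to
the aperiodic part of any one-sided subshift `Y` extends uniquely to a continuous
shift-commuting map `φ : X → Y`. -/
theorem statement8 {A B : Type*} [Fintype A] [TopologicalSpace A] [DiscreteTopology A]
    [Fintype B] [TopologicalSpace B] [DiscreteTopology B]
    (Z : Set (ℤ → A)) (hZ : IsSubshift Z)
    (hsync : ∀ s ∈ Z, TPeriodic s → Synchronizing Z s)
    (h1 : ¬ HasIsolatedPeriodicPt (posRay Z)) (h2 : ¬ HasIsolatedPeriodicPt (negRay Z))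
    (X : Set (ℕ → A)) (hX : X = posRay Z)
    (Y : Set (ℕ → B)) (hY : IsSubshift1 Y)
    (φ' : Aper1 X → Aper1 Y) (hcont : Continuous φ') (hφ' : ShiftCommuting1 φ') :
    ∃! φ : X → Y, Continuous φ ∧ ShiftCommuting1 φ ∧ RestrictsTo1 φ φ' :=
  statement8_general Z hZ hsync h1 h2 X hX Y hY φ' hcont hφ'
end

section
/- There exist a two-sided mixing sofic shift X and a topological conjugacy f' : X' → X' that is not the restriction of any topological conjugacy f : X → X. -/
open Set

/-- `X` is mixing: any two words of its language can be joined by a connecting word of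
any sufficiently large length. -/
def IsMixingShift {A : Type*} (X : Set (ℤ → A)) : Prop :=
  ∀ u v : List A, WordIn u X → WordIn v X →
    ∃ N : ℕ, ∀ n ≥ N, ∃ w : List A, w.length = n ∧ WordIn (u ++ w ++ v) X

/-- `X` is sofic: it is the image of an SFT under a continuous shift-commuting map. -/
def IsSoficShift {n : ℕ} (X : Set (ℤ → Fin n)) : Prop :=
  ∃ (m : ℕ) (X₀ : Set (ℤ → Fin m)), IsSFT X₀ ∧
    ∃ π : (ℤ → Fin m) → (ℤ → Fin n), Continuous π ∧
      (∀ x, π (tshift x) = tshift (π x)) ∧ π '' X₀ = X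

namespace S12

def allowedA (s t : Fin 4) : Bool :=
  [(0,0),(0,1),(1,0),(1,1),(1,2),(2,3),(3,2),(3,1)].contains (s.val, t.val)

def transA (y : ℤ → Fin 4) : Prop := ∀ i : ℤ, allowedA (y i) (y (i+1)) = true

def parityA (y : ℤ → Fin 4) : Prop :=
  ∀ l r : ℤ, l < r → y l ≠ 0 → y r ≠ 0 → (∀ j : ℤ, l < j → j < r → y j = 0) → Odd (r - l)

def CharX : Set (ℤ → Fin 4) := {y | transA y ∧ parityA y}

lemma allowedA_cases {s t : Fin 4} (h : allowedA s t = true) :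
    (s = 0 ∧ t = 0) ∨ (s = 0 ∧ t = 1) ∨ (s = 1 ∧ t = 0) ∨ (s = 1 ∧ t = 1) ∨
    (s = 1 ∧ t = 2) ∨ (s = 2 ∧ t = 3) ∨ (s = 3 ∧ t = 2) ∨ (s = 3 ∧ t = 1) := by
  revert h; revert s t; decide

lemma tshift_iter {A : Type*} (x : ℤ → A) (n : ℕ) (i : ℤ) :
    (tshift^[n] x) i = x (i + n) := by
  induction n generalizing i with
  | zero => simp
  | succ n ih =>
    rw [Function.iterate_succ_apply']
    show (tshift^[n] x) (i+1) = _
    rw [ih]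
    congr 1
    push_cast
    ring

end S12

namespace S12

/-- left boundary of the zero-block containing `i` -/
def lB (x : ℤ → Fin 4) (i l : ℤ) : Prop :=
  l < i ∧ x l ≠ 0 ∧ ∀ j : ℤ, l < j → j ≤ i → x j = 0

def rB (x : ℤ → Fin 4) (i r : ℤ) : Prop :=
  i < r ∧ x r ≠ 0 ∧ ∀ j : ℤ, i ≤ j → j < r → x j = 0

lemma lB_unique {x : ℤ → Fin 4} {i l l' : ℤ} (h : lB x i l) (h' : lB x i l') : l = l' := by
  by_contra hne
  rcases lt_or_gt_of_ne hne with hlt | hlt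
  · exact h'.2.1 (h.2.2 l' hlt (le_of_lt h'.1))
  · exact h.2.1 (h'.2.2 l hlt (le_of_lt h.1))

lemma rB_unique {x : ℤ → Fin 4} {i r r' : ℤ} (h : rB x i r) (h' : rB x i r') : r = r' := by
  by_contra hne
  rcases lt_or_gt_of_ne hne with hlt | hlt
  · exact h.2.1 (h'.2.2 r (le_of_lt h.1) hlt)
  · exact h'.2.1 (h.2.2 r' (le_of_lt h'.1) hlt)

lemma decide_not_of_iff {a b : Prop} [Decidable a] [Decidable b] (h : a ↔ ¬ b) :
    decide a = !decide b := by
  by_cases hb : b <;> by_cases ha : a <;> simp_all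

open scoped Classical in
noncomputable def phase (x : ℤ → Fin 4) (i : ℤ) : Bool :=
  if h : ∃ l, lB x i l then decide (Odd (i - h.choose))
  else if h' : ∃ r, rB x i r then decide (Even (h'.choose - i))
  else decide (Odd i)

open scoped Classical in
lemma specL {x : ℤ → Fin 4} {i l : ℤ} (h : lB x i l) :
    phase x i = decide (Odd (i - l)) := by
  have he : ∃ l, lB x i l := ⟨l, h⟩
  have hc : he.choose = l := lB_unique he.choose_spec h
  rw [phase, dif_pos he, hc]

open scoped Classical in
lemma specR {x : ℤ → Fin 4} {i r : ℤ} (hno : ¬ ∃ l, lB x i l) (h : rB x i r) :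
    phase x i = decide (Even (r - i)) := by
  have he : ∃ r, rB x i r := ⟨r, h⟩
  have hc : he.choose = r := rB_unique he.choose_spec h
  rw [phase, dif_neg hno, dif_pos he, hc]

open scoped Classical in
lemma specN {x : ℤ → Fin 4} {i : ℤ} (hno : ¬ ∃ l, lB x i l) (hno' : ¬ ∃ r, rB x i r) :
    phase x i = decide (Odd i) := by
  rw [phase, dif_neg hno, dif_neg hno']

/-- with the parity condition, the right-boundary formula holds unconditionally -/
lemma specRp {x : ℤ → Fin 4} {i r : ℤ} (hp : parityA x) (h : rB x i r) :
    phase x i = decide (Even (r - i)) := by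
  by_cases hl : ∃ l, lB x i l
  · obtain ⟨l, hlB⟩ := hl
    rw [specL hlB]
    have hlr : l < r := lt_trans hlB.1 h.1
    have hodd : Odd (r - l) := by
      refine hp l r hlr hlB.2.1 h.2.1 ?_
      intro j hj1 hj2
      rcases le_or_gt j i with hle | hlt
      · exact hlB.2.2 j hj1 hle
      · exact h.2.2 j (le_of_lt hlt) hj2
    refine decide_eq_decide.mpr ?_
    rw [Int.odd_iff] at hodd ⊢
    rw [Int.even_iff]
    omega
  · exact specR hl h

lemma phase_step {x : ℤ → Fin 4} {i : ℤ} (h0 : x i = 0) (h1 : x (i+1) = 0) :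
    phase x (i+1) = !(phase x i) := by
  by_cases hl : ∃ l, lB x i l
  · obtain ⟨l, hl1, hl2, hl3⟩ := hl
    have hlB : lB x i l := ⟨hl1, hl2, hl3⟩
    have hlB' : lB x (i+1) l := by
      refine ⟨by omega, hl2, ?_⟩
      intro j hj1 hj2
      rcases eq_or_lt_of_le hj2 with rfl | hlt
      · exact h1
      · exact hl3 j hj1 (by omega)
    rw [specL hlB, specL hlB']
    refine decide_not_of_iff ?_
    rw [Int.odd_iff, Int.odd_iff]; omega
  · have hl' : ¬ ∃ l, lB x (i+1) l := by
      rintro ⟨l, hl1, hl2, hl3⟩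
      have hli : l < i := by
        rcases lt_or_ge l i with h | h
        · exact h
        · exfalso; have hei : l = i := by omega
          exact hl2 (hei ▸ h0)
      exact hl ⟨l, hli, hl2, fun j hj1 hj2 => hl3 j hj1 (by omega)⟩
    have hli : ¬ (∃ l, lB x i l) := hl
    by_cases hr : ∃ r, rB x (i+1) r
    · obtain ⟨r, hr1, hr2, hr3⟩ := hr
      have hrB : rB x (i+1) r := ⟨hr1, hr2, hr3⟩
      have hrB' : rB x i r := by
        refine ⟨by omega, hr2, ?_⟩
        intro j hj1 hj2
        rcases eq_or_lt_of_le hj1 with rfl | hlt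
        · exact h0
        · exact hr3 j (by omega) hj2
      rw [specR hl' hrB, specR hli hrB']
      refine decide_not_of_iff ?_
      rw [Int.even_iff, Int.even_iff]; omega
    · have hr' : ¬ ∃ r, rB x i r := by
        rintro ⟨r, hr1, hr2, hr3⟩
        have hir : i + 1 < r := by
          rcases lt_or_ge (i+1) r with h | h
          · exact h
          · exfalso; have her : r = i + 1 := by omega
            exact hr2 (her ▸ h1)
        exact hr ⟨r, hir, hr2, fun j hj1 hj2 => hr3 j (by omega) hj2⟩
      rw [specN hl' hr, specN hli hr']
      refine decide_not_of_iff ?_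
      rw [Int.odd_iff, Int.odd_iff]; omega

/-- If `x` is somewhere nonzero and zero at `i`, then the zero block of `i` has a boundary. -/
lemma bdry_exists {x : ℤ → Fin 4} {i : ℤ} (hp : ∃ p, x p ≠ 0) (h0 : x i = 0) :
    (∃ l, lB x i l) ∨ (∃ r, rB x i r) := by
  classical
  obtain ⟨p, hp⟩ := hp
  rcases lt_or_gt_of_ne (fun h : p = i => hp (h ▸ h0)) with hpi | hpi
  · left
    have hb : ∃ b, ∀ z, (z < i ∧ x z ≠ 0) → z ≤ b := ⟨i, fun z hz => le_of_lt hz.1⟩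
    have hin : ∃ z, z < i ∧ x z ≠ 0 := ⟨p, hpi, hp⟩
    obtain ⟨l, hl, hmax⟩ := Int.exists_greatest_of_bdd hb hin
    refine ⟨l, hl.1, hl.2, ?_⟩
    intro j hj1 hj2
    by_contra hne
    rcases eq_or_lt_of_le hj2 with rfl | hlt
    · exact hne h0
    · exact absurd (hmax j ⟨hlt, hne⟩) (by omega)
  · right
    have hb : ∃ b, ∀ z, (i < z ∧ x z ≠ 0) → b ≤ z := ⟨i, fun z hz => le_of_lt hz.1⟩
    have hin : ∃ z, i < z ∧ x z ≠ 0 := ⟨p, hpi, hp⟩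
    obtain ⟨r, hr, hmin⟩ := Int.exists_least_of_bdd hb hin
    refine ⟨r, hr.1, hr.2, ?_⟩
    intro j hj1 hj2
    by_contra hne
    rcases eq_or_lt_of_le hj1 with rfl | hlt
    · exact hne h0
    · exact absurd (hmin j ⟨hlt, hne⟩) (by omega)

end S12

namespace S12

noncomputable def F0 (x : ℤ → Fin 4) (i : ℤ) : Fin 4 :=
  if x i = 0 then (if phase x i = true then 2 else 3) else if x i = 1 then 1 else 0

lemma F0_at0 {x : ℤ → Fin 4} {i : ℤ} (h : x i = 0) :
    F0 x i = if phase x i = true then 2 else 3 := by rw [F0, if_pos h]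

lemma F0_at1 {x : ℤ → Fin 4} {i : ℤ} (h : x i = 1) : F0 x i = 1 := by
  rw [F0, if_neg (by rw [h]; decide), if_pos h]

lemma F0_at23 {x : ℤ → Fin 4} {i : ℤ} (h : x i = 2 ∨ x i = 3) : F0 x i = 0 := by
  rcases h with h | h <;>
    rw [F0, if_neg (by rw [h]; decide), if_neg (by rw [h]; decide)]

lemma fin4_cases (v : Fin 4) : v = 0 ∨ v = 1 ∨ v = 2 ∨ v = 3 := by fin_cases v <;> simp

lemma F0_ne0_iff {x : ℤ → Fin 4} {i : ℤ} : F0 x i ≠ 0 ↔ (x i = 0 ∨ x i = 1) := by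
  constructor
  · intro h
    rcases fin4_cases (x i) with h' | h' | h' | h'
    · exact Or.inl h'
    · exact Or.inr h'
    · exact absurd (F0_at23 (Or.inl h')) h
    · exact absurd (F0_at23 (Or.inr h')) h
  · rintro (h | h)
    · rw [F0_at0 h]; split <;> decide
    · rw [F0_at1 h]; decide

lemma F0_eq0_iff {x : ℤ → Fin 4} {i : ℤ} : F0 x i = 0 ↔ (x i = 2 ∨ x i = 3) := by
  rcases fin4_cases (x i) with h' | h' | h' | h'
  · simp only [F0_at0 h', h']
    constructor
    · intro h; exfalso; revert h; split <;> decide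
    · rintro (h | h) <;> simp [h'] at h
  · simp [F0_at1 h', h']
  · simp [F0_at23 (Or.inl h'), h']
  · simp [F0_at23 (Or.inr h'), h']

/-- forward alternation of an ab-run after a boundary -/
lemma altF {x : ℤ → Fin 4} (ht : transA x) {l : ℤ} (hl : x l = 0 ∨ x l = 1) {n : ℕ}
    (hrun : ∀ t : ℕ, t < n → (x (l+1+t) = 2 ∨ x (l+1+t) = 3)) :
    ∀ t : ℕ, t < n → x (l+1+t) = if Even t then 2 else 3 := by
  intro t
  induction t with
  | zero =>
    intro h0
    have key : ∀ s u : Fin 4, allowedA s u = true → (s = 0 ∨ s = 1) →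
        (u = 2 ∨ u = 3) → u = 2 := by decide
    have hrt := hrun 0 h0
    push_cast at hrt
    simp only [add_zero] at hrt
    have hres := key (x l) (x (l+1)) (ht l) hl hrt
    push_cast
    simpa using hres
  | succ t ih =>
    intro hlt
    have iht := ih (by omega)
    have hrt := hrun t (by omega)
    have hrt1 := hrun (t+1) hlt
    have htr := ht (l+1+t)
    have hidx : l + 1 + ((t:ℤ) + 1) = (l + 1 + t) + 1 := by ring
    push_cast at hrt1 ⊢
    rw [hidx] at hrt1 ⊢
    by_cases he : Even t
    · have h2 : x (l+1+t) = 2 := by rw [iht]; simp [he]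
      have key : ∀ s u : Fin 4, allowedA s u = true → s = 2 →
          (u = 2 ∨ u = 3) → u = 3 := by decide
      have : x ((l+1+t)+1) = 3 := key _ _ htr h2 hrt1
      rw [this]
      simp [Nat.even_add_one, he]
    · have h2 : x (l+1+t) = 3 := by rw [iht]; simp [he]
      have key : ∀ s u : Fin 4, allowedA s u = true → s = 3 →
          (u = 2 ∨ u = 3) → u = 2 := by decide
      have : x ((l+1+t)+1) = 2 := key _ _ htr h2 hrt1
      rw [this]
      simp [Nat.even_add_one, he]

/-- backward alternation of an ab-run before a boundary -/
lemma altB {x : ℤ → Fin 4} (ht : transA x) {r : ℤ} (hr : x r = 0 ∨ x r = 1) {n : ℕ}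
    (hrun : ∀ t : ℕ, t < n → (x (r-1-t) = 2 ∨ x (r-1-t) = 3)) :
    ∀ t : ℕ, t < n → x (r-1-t) = if Even t then 3 else 2 := by
  intro t
  induction t with
  | zero =>
    intro h0
    have key : ∀ s u : Fin 4, allowedA s u = true → (s = 2 ∨ s = 3) →
        (u = 0 ∨ u = 1) → s = 3 := by decide
    have hpair := ht (r-1)
    have hidx : r - 1 + 1 = r := by ring
    rw [hidx] at hpair
    have := key _ _ hpair (by have := hrun 0 h0; push_cast at this; simpa using this) hr
    push_cast
    simpa using this
  | succ t ih =>
    intro hlt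
    have iht := ih (by omega)
    have hrt1 := hrun (t+1) hlt
    have hpair := ht (r-1-(t+1:ℕ))
    have hidx : r - 1 - ((t:ℤ)+1) + 1 = r - 1 - t := by ring
    push_cast at hrt1 hpair ⊢
    rw [hidx] at hpair
    by_cases he : Even t
    · have h2 : x (r-1-t) = 3 := by rw [iht]; simp [he]
      have key : ∀ s u : Fin 4, allowedA s u = true → u = 3 →
          (s = 2 ∨ s = 3) → s = 2 := by decide
      have : x (r-1-((t:ℤ)+1)) = 2 := key _ _ hpair h2 hrt1
      rw [this]
      simp [Nat.even_add_one, he]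
    · have h2 : x (r-1-t) = 2 := by rw [iht]; simp [he]
      have key : ∀ s u : Fin 4, allowedA s u = true → u = 2 →
          (s = 2 ∨ s = 3) → s = 3 := by decide
      have : x (r-1-((t:ℤ)+1)) = 3 := key _ _ hpair h2 hrt1
      rw [this]
      simp [Nat.even_add_one, he]

end S12

namespace S12

lemma not_even_one_int : ¬ Even (1:ℤ) := by rw [Int.even_iff]; omega
lemma odd_one_int : Odd (1:ℤ) := ⟨0, by norm_num⟩

lemma F0_trans {x : ℤ → Fin 4} (hx : x ∈ CharX) : transA (F0 x) := by
  intro i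
  rcases allowedA_cases (hx.1 i) with ⟨h, h'⟩ | ⟨h, h'⟩ | ⟨h, h'⟩ | ⟨h, h'⟩ |
    ⟨h, h'⟩ | ⟨h, h'⟩ | ⟨h, h'⟩ | ⟨h, h'⟩
  · -- (0,0)
    rw [F0_at0 h, F0_at0 h', phase_step h h']
    cases hph : phase x i <;> simp <;> decide
  · -- (0,1)
    have hrB : rB x i (i+1) := by
      refine ⟨by omega, by rw [h']; decide, ?_⟩
      intro j hj1 hj2
      have : j = i := by omega
      rw [this]; exact h
    have hph : phase x i = false := by
      rw [specRp hx.2 hrB]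
      simp only [decide_eq_false_iff_not]
      have : i + 1 - i = 1 := by ring
      rw [this]; exact not_even_one_int
    rw [F0_at0 h, F0_at1 h', hph]
    decide
  · -- (1,0)
    have hlB : lB x (i+1) i := by
      refine ⟨by omega, by rw [h]; decide, ?_⟩
      intro j hj1 hj2
      have : j = i + 1 := by omega
      rw [this]; exact h'
    have hph : phase x (i+1) = true := by
      rw [specL hlB]
      simp only [decide_eq_true_eq]
      have : i + 1 - i = 1 := by ring
      rw [this]; exact odd_one_int
    rw [F0_at1 h, F0_at0 h', hph]
    decide
  · rw [F0_at1 h, F0_at1 h']; decide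
  · rw [F0_at1 h, F0_at23 (Or.inl h')]; decide
  · rw [F0_at23 (Or.inl h), F0_at23 (Or.inr h')]; decide
  · rw [F0_at23 (Or.inr h), F0_at23 (Or.inl h')]; decide
  · rw [F0_at23 (Or.inr h), F0_at1 h']; decide

lemma F0_parity {x : ℤ → Fin 4} (hx : x ∈ CharX) : parityA (F0 x) := by
  intro l r hlr hl hr hz
  rcases eq_or_lt_of_le (by omega : l + 1 ≤ r) with heq | hlt
  · rw [← heq]; simpa using odd_one_int
  · -- the positions strictly between l and r form an ab-run of x
    have hrun : ∀ t : ℕ, t < (r - l - 1).toNat → (x (l+1+t) = 2 ∨ x (l+1+t) = 3) := by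
      intro t ht
      have := hz (l+1+t) (by omega) (by omega)
      exact F0_eq0_iff.mp this
    have hxl := F0_ne0_iff.mp hl
    have halt := altF hx.1 hxl hrun
    -- last position of the run
    set n := (r - l - 1).toNat with hn
    have hn1 : 1 ≤ n := by omega
    have hlast := halt (n-1) (by omega)
    have hxr := F0_ne0_iff.mp hr
    have hidx : l + 1 + ((n:ℤ) - 1) = r - 1 := by omega
    have hpair := hx.1 (r-1)
    have hidx2 : r - 1 + 1 = r := by ring
    rw [hidx2] at hpair
    have key : ∀ s u : Fin 4, allowedA s u = true → (s = 2 ∨ s = 3) →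
        (u = 0 ∨ u = 1) → s = 3 := by decide
    have hr1run : x (r-1) = 2 ∨ x (r-1) = 3 := by
      have := hrun (n-1) (by omega)
      push_cast [Nat.cast_sub hn1] at this
      rw [hidx] at this
      exact this
    have h3 : x (r-1) = 3 := key _ _ hpair hr1run hxr
    have : ¬ Even (n-1) := by
      intro he
      have := hlast
      push_cast [Nat.cast_sub hn1] at this
      rw [hidx] at this
      rw [h3] at this
      simp [he] at this
    rw [Nat.not_even_iff] at this
    rw [Int.odd_iff]
    omega

end S12

namespace S12

lemma tshift_mem_CharX {x : ℤ → Fin 4} (hx : x ∈ CharX) : tshift x ∈ CharX := by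
  constructor
  · intro i
    exact hx.1 (i+1)
  · intro l r hlr hl hr hz
    have := hx.2 (l+1) (r+1) (by omega) hl hr (by
      intro j hj1 hj2
      have := hz (j-1) (by omega) (by omega)
      show x j = 0
      have hj : j - 1 + 1 = j := by ring
      rw [← hj]; exact this)
    have harr : r + 1 - (l + 1) = r - l := by ring
    rwa [harr] at this

lemma tshift_iter_mem_CharX {x : ℤ → Fin 4} (hx : x ∈ CharX) (m : ℕ) :
    tshift^[m] x ∈ CharX := by
  induction m with
  | zero => exact hx
  | succ m ih => rw [Function.iterate_succ_apply']; exact tshift_mem_CharX ih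

lemma aper_nonzero {x : ℤ → Fin 4} (hap : ¬ TPeriodic x) : ∃ p, x p ≠ 0 := by
  by_contra h
  push_neg at h
  exact hap ⟨1, le_refl 1, funext fun i => by
    simp only [Function.iterate_one, tshift]; rw [h (i+1), h i]⟩

lemma period2_of_allab {x : ℤ → Fin 4} (ht : transA x)
    (h : ∀ p, x p = 2 ∨ x p = 3) : tshift^[2] x = x := by
  funext i
  rw [tshift_iter]
  have key : ∀ s u w : Fin 4, allowedA s u = true → allowedA u w = true →
      (s = 2 ∨ s = 3) → (u = 2 ∨ u = 3) → (w = 2 ∨ w = 3) → w = s := by decide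
  have h1 := ht i
  have h2 := ht (i+1)
  have hidx : i + 1 + 1 = i + 2 := by ring
  rw [hidx] at h2
  exact (key _ _ _ h1 h2 (h i) (h (i+1)) (h (i+2)))

lemma aper_notallab {x : ℤ → Fin 4} (ht : transA x) (hap : ¬ TPeriodic x) :
    ∃ p, (x p = 0 ∨ x p = 1) := by
  by_contra h
  push_neg at h
  have hab : ∀ p, x p = 2 ∨ x p = 3 := by
    intro p
    rcases fin4_cases (x p) with h' | h' | h' | h'
    · exact absurd h' (h p).1
    · exact absurd h' (h p).2
    · exact Or.inl h'
    · exact Or.inr h'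
  exact hap ⟨2, by norm_num, period2_of_allab ht hab⟩

lemma phase_shift {x : ℤ → Fin 4} {i : ℤ} (hp : ∃ p, x p ≠ 0) (h0 : x (i+1) = 0) :
    phase (tshift x) i = phase x (i+1) := by
  by_cases hL : ∃ l, lB x (i+1) l
  · obtain ⟨l, hl1, hl2, hl3⟩ := hL
    have hlB : lB x (i+1) l := ⟨hl1, hl2, hl3⟩
    have hlB' : lB (tshift x) i (l-1) := by
      refine ⟨by omega, ?_, ?_⟩
      · show x (l-1+1) ≠ 0
        have : l - 1 + 1 = l := by ring
        rw [this]; exact hl2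
      · intro j hj1 hj2
        show x (j+1) = 0
        exact hl3 (j+1) (by omega) (by omega)
    rw [specL hlB, specL hlB']
    congr 1
    · have : i - (l-1) = i + 1 - l := by ring
      rw [this]
  · have hL' : ¬ ∃ l, lB (tshift x) i l := by
      rintro ⟨l, h1, h2, h3⟩
      refine hL ⟨l+1, by omega, h2, ?_⟩
      intro j hj1 hj2
      have := h3 (j-1) (by omega) (by omega)
      show x j = 0
      have hj : j - 1 + 1 = j := by ring
      rw [← hj]; exact this
    rcases bdry_exists hp h0 with hl | ⟨r, hr1, hr2, hr3⟩
    · exact absurd hl hL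
    · have hrB : rB x (i+1) r := ⟨hr1, hr2, hr3⟩
      have hrB' : rB (tshift x) i (r-1) := by
        refine ⟨by omega, ?_, ?_⟩
        · show x (r-1+1) ≠ 0
          have : r - 1 + 1 = r := by ring
          rw [this]; exact hr2
        · intro j hj1 hj2
          show x (j+1) = 0
          exact hr3 (j+1) (by omega) (by omega)
      rw [specR hL hrB, specR hL' hrB']
      congr 1
      · have : r - 1 - i = r - (i+1) := by ring
        rw [this]

lemma F0_shift {x : ℤ → Fin 4} (hp : ∃ p, x p ≠ 0) :
    F0 (tshift x) = tshift (F0 x) := by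
  funext i
  show F0 (tshift x) i = F0 x (i+1)
  have hs : tshift x i = x (i+1) := rfl
  rcases fin4_cases (x (i+1)) with h | h | h | h
  · rw [F0_at0 (hs ▸ h : tshift x i = 0), F0_at0 h, phase_shift hp h]
  · rw [F0_at1 (hs ▸ h : tshift x i = 1), F0_at1 h]
  · rw [F0_at23 (Or.inl (hs ▸ h : tshift x i = 2)), F0_at23 (Or.inl h)]
  · rw [F0_at23 (Or.inr (hs ▸ h : tshift x i = 3)), F0_at23 (Or.inr h)]

lemma F0_shift_iter {x : ℤ → Fin 4} (hp : ∃ p, x p ≠ 0) (m : ℕ) :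
    F0 (tshift^[m] x) = tshift^[m] (F0 x) := by
  induction m generalizing x with
  | zero => rfl
  | succ m ih =>
    rw [Function.iterate_succ_apply, Function.iterate_succ_apply]
    have hp' : ∃ p, tshift x p ≠ 0 := by
      obtain ⟨p, hpp⟩ := hp
      exact ⟨p - 1, by
        show x (p-1+1) ≠ 0
        have : p - 1 + 1 = p := by ring
        rw [this]; exact hpp⟩
    rw [ih hp', F0_shift hp]

lemma F0_invol {x : ℤ → Fin 4} (hx : x ∈ CharX) (hap : ¬ TPeriodic x) :
    F0 (F0 x) = x := by
  have hnz := aper_nonzero hap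
  have hnab := aper_notallab hx.1 hap
  have hFnz : ∃ p, F0 x p ≠ 0 := by
    obtain ⟨p, hp⟩ := hnab
    exact ⟨p, F0_ne0_iff.mpr hp⟩
  funext i
  rcases fin4_cases (x i) with h | h | h | h
  · -- x i = 0, F0 x i ∈ {2,3}
    have : F0 x i = 2 ∨ F0 x i = 3 := by
      rw [F0_at0 h]; split
      · exact Or.inl rfl
      · exact Or.inr rfl
    rw [F0_at23 this, h]
  · rw [F0_at1 (F0_at1 h), h]
  · -- x i = 2
    have hF0 : F0 x i = 0 := F0_at23 (Or.inl h)
    rw [F0_at0 hF0]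
    suffices hph : phase (F0 x) i = true by rw [hph, h]; simp
    by_cases hL : ∃ l, lB (F0 x) i l
    · obtain ⟨l, hl1, hl2, hl3⟩ := hL
      have hxl : x l = 0 ∨ x l = 1 := F0_ne0_iff.mp hl2
      set n := (i - l).toNat with hn
      have hrun : ∀ t : ℕ, t < n → (x (l+1+t) = 2 ∨ x (l+1+t) = 3) := by
        intro t htn
        exact F0_eq0_iff.mp (hl3 (l+1+t) (by omega) (by omega))
      have halt := altF hx.1 hxl hrun (n-1) (by omega)
      have hidx : l + 1 + ((n:ℤ) - 1) = i := by omega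
      have hEv : Even (n - 1) := by
        by_contra hne
        push_cast [Nat.cast_sub (by omega : 1 ≤ n)] at halt
        rw [hidx, h] at halt
        simp [hne] at halt
      rw [specL ⟨hl1, hl2, hl3⟩]
      simp only [decide_eq_true_eq]
      rw [Int.odd_iff]
      rw [Nat.even_iff] at hEv
      omega
    · rcases bdry_exists hFnz hF0 with hl | ⟨r, hr1, hr2, hr3⟩
      · exact absurd hl hL
      · have hxr : x r = 0 ∨ x r = 1 := F0_ne0_iff.mp hr2
        set n := (r - i).toNat with hn
        have hrun : ∀ t : ℕ, t < n → (x (r-1-t) = 2 ∨ x (r-1-t) = 3) := by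
          intro t htn
          exact F0_eq0_iff.mp (hr3 (r-1-t) (by omega) (by omega))
        have halt := altB hx.1 hxr hrun (n-1) (by omega)
        have hidx : r - 1 - ((n:ℤ) - 1) = i := by omega
        have hnEv : ¬ Even (n - 1) := by
          intro hne
          push_cast [Nat.cast_sub (by omega : 1 ≤ n)] at halt
          rw [hidx, h] at halt
          simp [hne] at halt
        rw [specR hL ⟨hr1, hr2, hr3⟩]
        simp only [decide_eq_true_eq]
        rw [Int.even_iff]
        rw [Nat.not_even_iff] at hnEv
        omega
  · -- x i = 3
    have hF0 : F0 x i = 0 := F0_at23 (Or.inr h)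
    rw [F0_at0 hF0]
    suffices hph : phase (F0 x) i = false by rw [hph, h]; simp
    by_cases hL : ∃ l, lB (F0 x) i l
    · obtain ⟨l, hl1, hl2, hl3⟩ := hL
      have hxl : x l = 0 ∨ x l = 1 := F0_ne0_iff.mp hl2
      set n := (i - l).toNat with hn
      have hrun : ∀ t : ℕ, t < n → (x (l+1+t) = 2 ∨ x (l+1+t) = 3) := by
        intro t htn
        exact F0_eq0_iff.mp (hl3 (l+1+t) (by omega) (by omega))
      have halt := altF hx.1 hxl hrun (n-1) (by omega)
      have hidx : l + 1 + ((n:ℤ) - 1) = i := by omega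
      have hEv : ¬ Even (n - 1) := by
        intro hne
        push_cast [Nat.cast_sub (by omega : 1 ≤ n)] at halt
        rw [hidx, h] at halt
        simp [hne] at halt
      rw [specL ⟨hl1, hl2, hl3⟩]
      simp only [decide_eq_false_iff_not]
      rw [Int.odd_iff]
      rw [Nat.not_even_iff] at hEv
      omega
    · rcases bdry_exists hFnz hF0 with hl | ⟨r, hr1, hr2, hr3⟩
      · exact absurd hl hL
      · have hxr : x r = 0 ∨ x r = 1 := F0_ne0_iff.mp hr2
        set n := (r - i).toNat with hn
        have hrun : ∀ t : ℕ, t < n → (x (r-1-t) = 2 ∨ x (r-1-t) = 3) := by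
          intro t htn
          exact F0_eq0_iff.mp (hr3 (r-1-t) (by omega) (by omega))
        have halt := altB hx.1 hxr hrun (n-1) (by omega)
        have hidx : r - 1 - ((n:ℤ) - 1) = i := by omega
        have hnEv : Even (n - 1) := by
          by_contra hne
          push_cast [Nat.cast_sub (by omega : 1 ≤ n)] at halt
          rw [hidx, h] at halt
          simp [hne] at halt
        rw [specR hL ⟨hr1, hr2, hr3⟩]
        simp only [decide_eq_false_iff_not]
        rw [Int.even_iff]
        rw [Nat.even_iff] at hnEv
        omega

end S12

namespace S12

lemma aper_shift_iter {x : ℤ → Fin 4} (hap : ¬ TPeriodic x) (m : ℕ) :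
    ¬ TPeriodic (tshift^[m] x) := by
  rintro ⟨k, hk1, hk⟩
  refine hap ⟨k, hk1, ?_⟩
  funext j
  have := congrFun hk (j - m)
  rw [← Function.iterate_add_apply, Nat.add_comm, Function.iterate_add_apply] at this
  rw [tshift_iter, tshift_iter, tshift_iter] at this
  have harr : j - m + m = j := by ring
  rw [harr] at this
  rw [tshift_iter]
  exact this

lemma F0_mem_aper {x : ℤ → Fin 4} (hx : x ∈ Aper CharX) : F0 x ∈ Aper CharX := by
  have hnz := aper_nonzero hx.2
  refine ⟨⟨F0_trans hx.1, F0_parity hx.1⟩, ?_⟩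
  rintro ⟨m, hm1, hm⟩
  have e1 : F0 (tshift^[m] x) = F0 x := by rw [F0_shift_iter hnz, hm]
  have hsx : tshift^[m] x ∈ CharX := tshift_iter_mem_CharX hx.1 m
  have hsap : ¬ TPeriodic (tshift^[m] x) := aper_shift_iter hx.2 m
  have e2 : tshift^[m] x = x := by
    have := congrArg F0 e1
    rwa [F0_invol hsx hsap, F0_invol hx.1 hx.2] at this
  exact hx.2 ⟨m, hm1, e2⟩

/-- local determination of `F0` (continuity core) -/
lemma F0_local {x₀ : ℤ → Fin 4} (hx₀ : x₀ ∈ Aper CharX) (i : ℤ) :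
    ∃ a b : ℤ, a ≤ i ∧ i ≤ b ∧
      ∀ y, y ∈ CharX → (∀ j, a ≤ j → j ≤ b → y j = x₀ j) → F0 y i = F0 x₀ i := by
  rcases fin4_cases (x₀ i) with h | h | h | h
  · -- zero case: find a boundary
    rcases bdry_exists (aper_nonzero hx₀.2) h with ⟨l, hl1, hl2, hl3⟩ | ⟨r, hr1, hr2, hr3⟩
    · refine ⟨l, i, by omega, le_refl i, ?_⟩
      intro y hy hagree
      have hyi : y i = 0 := by rw [hagree i (by omega) (by omega)]; exact h
      have hlBy : lB y i l := by
        refine ⟨hl1, by rw [hagree l (by omega) (by omega)]; exact hl2, ?_⟩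
        intro j hj1 hj2
        rw [hagree j (by omega) (by omega)]
        exact hl3 j hj1 hj2
      rw [F0_at0 hyi, F0_at0 h, specL hlBy, specL ⟨hl1, hl2, hl3⟩]
    · refine ⟨i, r, le_refl i, by omega, ?_⟩
      intro y hy hagree
      have hyi : y i = 0 := by rw [hagree i (by omega) (by omega)]; exact h
      have hrBy : rB y i r := by
        refine ⟨hr1, by rw [hagree r (by omega) (by omega)]; exact hr2, ?_⟩
        intro j hj1 hj2
        rw [hagree j (by omega) (by omega)]
        exact hr3 j hj1 hj2
      rw [F0_at0 hyi, F0_at0 h, specRp hy.2 hrBy, specRp hx₀.1.2 ⟨hr1, hr2, hr3⟩]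
  all_goals {
    refine ⟨i, i, le_refl i, le_refl i, ?_⟩
    intro y hy hagree
    have hyi : y i = x₀ i := hagree i (le_refl i) (le_refl i)
    first
    | rw [F0_at1 (hyi.trans h), F0_at1 h]
    | rw [F0_at23 (Or.inl (hyi.trans h)), F0_at23 (Or.inl h)]
    | rw [F0_at23 (Or.inr (hyi.trans h)), F0_at23 (Or.inr h)]
  }

lemma cylinder_mem_nhds (x₀ : ℤ → Fin 4) (s : Finset ℤ) :
    {y : ℤ → Fin 4 | ∀ j ∈ s, y j = x₀ j} ∈ nhds x₀ := by
  have hopen : IsOpen {y : ℤ → Fin 4 | ∀ j ∈ s, y j = x₀ j} := by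
    have : {y : ℤ → Fin 4 | ∀ j ∈ s, y j = x₀ j} =
        ⋂ j ∈ s, (fun y : ℤ → Fin 4 => y j) ⁻¹' {x₀ j} := by
      ext y; simp
    rw [this]
    exact isOpen_biInter_finset fun j _ =>
      (continuous_apply j).isOpen_preimage _ (isOpen_discrete _)
  exact hopen.mem_nhds (fun j _ => rfl)

lemma F0_continuous : Continuous (fun x : (Aper CharX) => F0 (x : ℤ → Fin 4)) := by
  apply continuous_pi
  intro i
  rw [continuous_iff_continuousAt]
  intro x₀
  obtain ⟨a, b, ha, hb, hloc⟩ := F0_local x₀.2 i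
  have hev : {y : ℤ → Fin 4 | ∀ j ∈ Finset.Icc a b, y j = (x₀ : ℤ → Fin 4) j} ∈
      nhds (x₀ : ℤ → Fin 4) := cylinder_mem_nhds _ _
  have hev2 : {y : Aper CharX | F0 (y : ℤ → Fin 4) i = F0 (x₀ : ℤ → Fin 4) i} ∈ nhds x₀ := by
    rw [nhds_subtype_eq_comap]
    refine Filter.mem_comap.mpr ⟨_, hev, ?_⟩
    intro y hy
    exact hloc _ y.2.1 (fun j hj1 hj2 => hy j (Finset.mem_Icc.mpr ⟨hj1, hj2⟩))
  unfold ContinuousAt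
  refine Filter.Tendsto.congr' ?_ tendsto_const_nhds
  filter_upwards [hev2] with y hy
  exact hy.symm

end S12

namespace S12

def allowedB (s t : Fin 5) : Bool :=
  [(0,1),(1,0),(1,2),(2,0),(2,2),(2,3),(3,4),(4,3),(4,2)].contains (s.val, t.val)

def F5 : Set (List (Fin 5)) :=
  (fun p : Fin 5 × Fin 5 => [p.1, p.2]) '' {p | allowedB p.1 p.2 = false}

def X₀ : Set (ℤ → Fin 5) := {x | ∀ w ∈ F5, ¬ OccursIn w x}

lemma F5_finite : F5.Finite := (Set.toFinite _).image _

def gmap : Fin 5 → Fin 4 := ![0, 0, 1, 2, 3]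

def proj (x : ℤ → Fin 5) : ℤ → Fin 4 := fun i => gmap (x i)

lemma occursAt_pair {α : Type*} (s t : α) (x : ℤ → α) (i : ℤ) :
    OccursAt [s, t] x i ↔ (x i = s ∧ x (i+1) = t) := by
  constructor
  · intro h
    have h0 := h ⟨0, by norm_num⟩
    have h1 := h ⟨1, by norm_num⟩
    simp only [List.get] at h0 h1
    constructor
    · simpa using h0
    · simpa using h1
  · rintro ⟨h0, h1⟩
    intro j
    match j with
    | ⟨0, _⟩ => simpa using h0
    | ⟨1, _⟩ => simpa using h1

lemma mem_X₀_iff (x : ℤ → Fin 5) : x ∈ X₀ ↔ ∀ i : ℤ, allowedB (x i) (x (i+1)) = true := by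
  constructor
  · intro hx i
    by_contra h
    have hf : allowedB (x i) (x (i+1)) = false := by
      cases hab : allowedB (x i) (x (i+1))
      · rfl
      · exact absurd hab h
    exact hx [x i, x (i+1)] ⟨(x i, x (i+1)), hf, rfl⟩
      ⟨i, (occursAt_pair _ _ _ _).mpr ⟨rfl, rfl⟩⟩
  · rintro h w ⟨⟨s, t⟩, hst, rfl⟩ ⟨i, hocc⟩
    obtain ⟨h0, h1⟩ := (occursAt_pair s t x i).mp hocc
    have hT := h i
    rw [h0, h1] at hT
    simp only [Set.mem_setOf_eq] at hst
    rw [hT] at hst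
    simp at hst

lemma proj_cont : Continuous proj := by
  apply continuous_pi
  intro i
  exact Continuous.comp (continuous_of_discreteTopology) (continuous_apply i)

lemma proj_shift : ∀ x, proj (tshift x) = tshift (proj x) := fun _ => rfl

/-- zero-run alternation in the cover -/
lemma altZ {x : ℤ → Fin 5} (ht : ∀ i : ℤ, allowedB (x i) (x (i+1)) = true)
    {l : ℤ} (hl : gmap (x l) ≠ 0) {n : ℕ}
    (hrun : ∀ t : ℕ, t < n → gmap (x (l+1+t)) = 0) :
    ∀ t : ℕ, t < n → x (l+1+t) = if Even t then 0 else 1 := by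
  intro t
  induction t with
  | zero =>
    intro h0
    have key : ∀ s u : Fin 5, allowedB s u = true → gmap s ≠ 0 → gmap u = 0 → u = 0 := by
      decide
    have hrt := hrun 0 h0
    push_cast at hrt
    simp only [add_zero] at hrt
    have := key _ _ (ht l) hl hrt
    push_cast
    simpa using this
  | succ t ih =>
    intro hlt
    have iht := ih (by omega)
    have hrt1 := hrun (t+1) hlt
    have hpair := ht (l+1+t)
    have hidx : l + 1 + ((t:ℤ) + 1) = (l + 1 + t) + 1 := by ring
    push_cast at hrt1 ⊢
    rw [hidx] at hrt1 ⊢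
    by_cases he : Even t
    · have h2 : x (l+1+t) = 0 := by rw [iht]; simp [he]
      have key : ∀ s u : Fin 5, allowedB s u = true → s = 0 → gmap u = 0 → u = 1 := by decide
      rw [key _ _ hpair h2 hrt1]
      simp [Nat.even_add_one, he]
    · have h2 : x (l+1+t) = 1 := by rw [iht]; simp [he]
      have key : ∀ s u : Fin 5, allowedB s u = true → s = 1 → gmap u = 0 → u = 0 := by decide
      rw [key _ _ hpair h2 hrt1]
      simp [Nat.even_add_one, he]

lemma proj_mem_CharX {x : ℤ → Fin 5} (hx : x ∈ X₀) : proj x ∈ CharX := by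
  have ht := (mem_X₀_iff x).mp hx
  constructor
  · intro i
    have key : ∀ s u : Fin 5, allowedB s u = true → allowedA (gmap s) (gmap u) = true := by
      decide
    exact key _ _ (ht i)
  · intro l r hlr hl hr hz
    rcases eq_or_lt_of_le (by omega : l + 1 ≤ r) with heq | hlt
    · rw [← heq]; simpa using odd_one_int
    · set n := (r - l - 1).toNat with hn
      have hrun : ∀ t : ℕ, t < n → gmap (x (l+1+t)) = 0 := by
        intro t htn
        exact hz (l+1+t) (by omega) (by omega)
      have halt := altZ ht hl hrun (n-1) (by omega)
      have hidx : l + 1 + ((n:ℤ) - 1) = r - 1 := by omega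
      have hpair := ht (r-1)
      have hidx2 : r - 1 + 1 = r := by ring
      rw [hidx2] at hpair
      have key : ∀ s u : Fin 5, allowedB s u = true → gmap s = 0 → gmap u ≠ 0 → s = 1 := by
        decide
      have hgr1 : gmap (x (r-1)) = 0 := by
        have := hrun (n-1) (by omega)
        push_cast [Nat.cast_sub (by omega : 1 ≤ n)] at this
        rwa [hidx] at this
      have h1 : x (r-1) = 1 := key _ _ hpair hgr1 hr
      have hnEv : ¬ Even (n-1) := by
        intro he
        push_cast [Nat.cast_sub (by omega : 1 ≤ n)] at halt
        rw [hidx, h1] at halt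
        simp [he] at halt
      rw [Nat.not_even_iff] at hnEv
      rw [Int.odd_iff]
      omega

noncomputable def lift5 (y : ℤ → Fin 4) (i : ℤ) : Fin 5 :=
  if y i = 0 then (if phase y i = true then 0 else 1)
  else if y i = 1 then 2 else if y i = 2 then 3 else 4

lemma lift5_at0 {y : ℤ → Fin 4} {i : ℤ} (h : y i = 0) :
    lift5 y i = if phase y i = true then 0 else 1 := by rw [lift5, if_pos h]

lemma lift5_at1 {y : ℤ → Fin 4} {i : ℤ} (h : y i = 1) : lift5 y i = 2 := by
  rw [lift5, if_neg (by rw [h]; decide), if_pos h]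

lemma lift5_at2 {y : ℤ → Fin 4} {i : ℤ} (h : y i = 2) : lift5 y i = 3 := by
  rw [lift5, if_neg (by rw [h]; decide), if_neg (by rw [h]; decide), if_pos h]

lemma lift5_at3 {y : ℤ → Fin 4} {i : ℤ} (h : y i = 3) : lift5 y i = 4 := by
  rw [lift5, if_neg (by rw [h]; decide), if_neg (by rw [h]; decide),
    if_neg (by rw [h]; decide)]

lemma lift5_proj {y : ℤ → Fin 4} : proj (lift5 y) = y := by
  funext i
  rcases fin4_cases (y i) with h | h | h | h
  · rw [proj, lift5_at0 h, h]; split <;> decide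
  · rw [proj, lift5_at1 h, h]; decide
  · rw [proj, lift5_at2 h, h]; decide
  · rw [proj, lift5_at3 h, h]; decide

lemma lift5_mem_X₀ {y : ℤ → Fin 4} (hy : y ∈ CharX) : lift5 y ∈ X₀ := by
  rw [mem_X₀_iff]
  intro i
  rcases allowedA_cases (hy.1 i) with ⟨h, h'⟩ | ⟨h, h'⟩ | ⟨h, h'⟩ | ⟨h, h'⟩ |
    ⟨h, h'⟩ | ⟨h, h'⟩ | ⟨h, h'⟩ | ⟨h, h'⟩
  · -- (0,0)
    rw [lift5_at0 h, lift5_at0 h', phase_step h h']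
    cases hph : phase y i <;> simp <;> decide
  · -- (0,1)
    have hrB : rB y i (i+1) := by
      refine ⟨by omega, by rw [h']; decide, ?_⟩
      intro j hj1 hj2
      have : j = i := by omega
      rw [this]; exact h
    have hph : phase y i = false := by
      rw [specRp hy.2 hrB]
      simp only [decide_eq_false_iff_not]
      have : i + 1 - i = 1 := by ring
      rw [this]; exact not_even_one_int
    rw [lift5_at0 h, lift5_at1 h', hph]
    decide
  · -- (1,0)
    have hlB : lB y (i+1) i := by
      refine ⟨by omega, by rw [h]; decide, ?_⟩
      intro j hj1 hj2
      have : j = i + 1 := by omega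
      rw [this]; exact h'
    have hph : phase y (i+1) = true := by
      rw [specL hlB]
      simp only [decide_eq_true_eq]
      have : i + 1 - i = 1 := by ring
      rw [this]; exact odd_one_int
    rw [lift5_at1 h, lift5_at0 h', hph]
    decide
  · rw [lift5_at1 h, lift5_at1 h']; decide
  · rw [lift5_at1 h, lift5_at2 h']; decide
  · rw [lift5_at2 h, lift5_at3 h']; decide
  · rw [lift5_at3 h, lift5_at2 h']; decide
  · rw [lift5_at3 h, lift5_at1 h']; decide

lemma proj_image : proj '' X₀ = CharX := by
  apply Set.Subset.antisymm
  · rintro y ⟨x, hx, rfl⟩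
    exact proj_mem_CharX hx
  · intro y hy
    exact ⟨lift5 y, lift5_mem_X₀ hy, lift5_proj⟩

lemma CharX_sofic : IsSoficShift CharX := by
  refine ⟨5, X₀, ⟨F5, F5_finite, rfl⟩, proj, proj_cont, proj_shift, proj_image⟩

end S12

namespace S12

lemma shiftk_mem_CharX {x : ℤ → Fin 4} (hx : x ∈ CharX) (k : ℤ) :
    (fun j => x (j + k)) ∈ CharX := by
  constructor
  · intro i
    have := hx.1 (i + k)
    have harr : i + k + 1 = i + 1 + k := by ring
    rw [harr] at this
    exact this
  · intro l r hlr hl hr hz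
    have := hx.2 (l+k) (r+k) (by omega) hl hr (by
      intro j hj1 hj2
      have h2 : x (j - k + k) = 0 := hz (j-k) (by omega) (by omega)
      have harr : j - k + k = j := by ring
      rwa [harr] at h2)
    have harr : r + k - (l + k) = r - l := by ring
    rwa [harr] at this

lemma occursAt_shiftk {α : Type*} {w : List α} {x : ℤ → α} {i : ℤ} (h : OccursAt w x i)
    (k : ℤ) : OccursAt w (fun j => x (j + k)) (i - k) := by
  intro j
  have := h j
  have harr : i - k + (j:ℕ) + k = i + (j:ℕ) := by ring
  show x (i - k + (j:ℕ) + k) = _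
  rw [harr]
  exact this

lemma occursAt_congr {α : Type*} {w : List α} {P z : ℤ → α} {i : ℤ}
    (hagree : ∀ j, i ≤ j → j < i + w.length → P j = z j) (h : OccursAt w z i) :
    OccursAt w P i := by
  intro j
  rw [hagree (i + (j:ℕ)) (by omega) (by
    have := j.2
    omega)]
  exact h j

lemma occursAt_append {α : Type*} {u w : List α} {x : ℤ → α} {i : ℤ}
    (hu : OccursAt u x i) (hw : OccursAt w x (i + u.length)) :
    OccursAt (u ++ w) x i := by
  intro j
  have hj : (j:ℕ) < u.length + w.length := by
    have := j.2
    simpa [List.length_append] using this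
  by_cases h : (j : ℕ) < u.length
  · have := hu ⟨j, h⟩
    simp only [List.get_eq_getElem] at this ⊢
    rw [List.getElem_append_left h]
    exact this
  · push_neg at h
    have hlt : (j:ℕ) - u.length < w.length := by omega
    have := hw ⟨(j:ℕ) - u.length, hlt⟩
    simp only [List.get_eq_getElem] at this ⊢
    rw [List.getElem_append_right h]
    have harr : i + ((j:ℕ):ℤ) = i + (u.length:ℤ) + (((j:ℕ) - u.length : ℕ) : ℤ) := by
      push_cast [Nat.cast_sub h]
      ring
    rw [harr]
    exact this

/-- gluing two points of `CharX` at a seam where both are nonzero just before it -/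
lemma glueA {z₁ z₂ : ℤ → Fin 4} (h₁ : z₁ ∈ CharX) (h₂ : z₂ ∈ CharX) {s : ℤ}
    (hn₁ : z₁ (s-1) ≠ 0) (hn₂ : z₂ (s-1) ≠ 0)
    (hseam : allowedA (z₁ (s-1)) (z₂ s) = true) :
    (fun j => if j < s then z₁ j else z₂ j) ∈ CharX := by
  set P := fun j => if j < s then z₁ j else z₂ j with hP
  have hP1 : ∀ j, j < s → P j = z₁ j := fun j hj => if_pos hj
  have hP2 : ∀ j, s ≤ j → P j = z₂ j := fun j hj => if_neg (by omega)
  constructor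
  · intro i
    rcases lt_or_ge (i+1) s with h | h
    · rw [hP1 i (by omega), hP1 (i+1) h]; exact h₁.1 i
    · rcases lt_or_ge i s with h' | h'
      · have : i = s - 1 := by omega
        subst this
        rw [hP1 (s-1) (by omega), hP2 (s-1+1) (by omega)]
        have harr : s - 1 + 1 = s := by ring
        rw [harr]
        exact hseam
      · rw [hP2 i h', hP2 (i+1) (by omega)]; exact h₂.1 i
  · intro l r hlr hl hr hz
    rcases le_or_gt r (s-1) with hrs | hrs
    · -- entirely in z₁ region
      refine h₁.2 l r hlr ?_ ?_ ?_
      · rw [← hP1 l (by omega)]; exact hl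
      · rw [← hP1 r (by omega)]; exact hr
      · intro j hj1 hj2
        rw [← hP1 j (by omega)]; exact hz j hj1 hj2
    · rcases le_or_gt (s-1) l with hls | hls
      · -- entirely in z₂ region (note z₂ (s-1) ≠ 0 so parity transfers at l = s-1)
        refine h₂.2 l r hlr ?_ ?_ ?_
        · rcases eq_or_lt_of_le hls with rfl | hlt
          · exact hn₂
          · rw [← hP2 l (by omega)]; exact hl
        · rw [← hP2 r (by omega)]; exact hr
        · intro j hj1 hj2
          rcases le_or_gt (s-1) j with hjs | hjs
          · rw [← hP2 j (by omega)]; exact hz j hj1 hj2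
          · exfalso
            -- j < s-1 and l ≥ s-1 impossible
            omega
      · -- l < s-1 < r : the position s-1 is strictly between and nonzero
        exfalso
        have h0 : P (s-1) = 0 := hz (s-1) (by omega) (by omega)
        rw [hP1 (s-1) (by omega)] at h0
        exact hn₁ h0

/-- gluing where both are nonzero just after the seam -/
lemma glueB {z₁ z₂ : ℤ → Fin 4} (h₁ : z₁ ∈ CharX) (h₂ : z₂ ∈ CharX) {s : ℤ}
    (hn₁ : z₁ s ≠ 0) (hn₂ : z₂ s ≠ 0)
    (hseam : allowedA (z₁ (s-1)) (z₂ s) = true) :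
    (fun j => if j < s then z₁ j else z₂ j) ∈ CharX := by
  set P := fun j => if j < s then z₁ j else z₂ j with hP
  have hP1 : ∀ j, j < s → P j = z₁ j := fun j hj => if_pos hj
  have hP2 : ∀ j, s ≤ j → P j = z₂ j := fun j hj => if_neg (by omega)
  constructor
  · intro i
    rcases lt_or_ge (i+1) s with h | h
    · rw [hP1 i (by omega), hP1 (i+1) h]; exact h₁.1 i
    · rcases lt_or_ge i s with h' | h'
      · have : i = s - 1 := by omega
        subst this
        rw [hP1 (s-1) (by omega), hP2 (s-1+1) (by omega)]
        have harr : s - 1 + 1 = s := by ring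
        rw [harr]
        exact hseam
      · rw [hP2 i h', hP2 (i+1) (by omega)]; exact h₂.1 i
  · intro l r hlr hl hr hz
    rcases le_or_gt r s with hrs | hrs
    · -- r ≤ s : z₁'s block (z₁ s ≠ 0 covers r = s)
      refine h₁.2 l r hlr ?_ ?_ ?_
      · rw [← hP1 l (by omega)]; exact hl
      · rcases eq_or_lt_of_le hrs with rfl | hlt
        · exact hn₁
        · rw [← hP1 r (by omega)]; exact hr
      · intro j hj1 hj2
        rw [← hP1 j (by omega)]; exact hz j hj1 hj2
    · rcases le_or_gt s l with hls | hls
      · refine h₂.2 l r hlr ?_ ?_ ?_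
        · rw [← hP2 l (by omega)]; exact hl
        · rw [← hP2 r (by omega)]; exact hr
        · intro j hj1 hj2
          rw [← hP2 j (by omega)]; exact hz j hj1 hj2
      · -- l < s < r : position s strictly between is nonzero
        exfalso
        have h0 : P s = 0 := hz s (by omega) (by omega)
        rw [hP2 s (by omega)] at h0
        exact hn₂ h0

end S12

namespace S12

lemma const1_mem_CharX : (fun _ : ℤ => (1 : Fin 4)) ∈ CharX := by
  constructor
  · intro i
    show allowedA 1 1 = true
    decide
  · intro l r hlr hl hr hz
    rcases eq_or_lt_of_le (by omega : l + 1 ≤ r) with heq | hlt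
    · rw [← heq]; simpa using odd_one_int
    · exfalso
      have := hz (l+1) (by omega) (by omega)
      simp at this

lemma cut_right {x : ℤ → Fin 4} (hx : x ∈ CharX) (m : ℤ) :
    ∃ z ∈ CharX, (∀ j, j ≤ m → z j = x j) ∧ ∃ d, m ≤ d ∧ ∀ j, d < j → z j = (1 : Fin 4) := by
  classical
  by_cases hc1 : ∃ j, m ≤ j ∧ (x j = 1 ∨ x j = 3)
  · obtain ⟨jj, hjm, hj13⟩ := hc1
    refine ⟨fun j => if j < jj + 1 then x j else 1, ?_, ?_, jj, hjm, ?_⟩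
    · have hseam : allowedA (x (jj + 1 - 1)) ((fun _ : ℤ => (1:Fin 4)) (jj+1)) = true := by
        show allowedA (x (jj + 1 - 1)) 1 = true
        have harr : jj + 1 - 1 = jj := by ring
        rw [harr]
        rcases hj13 with h | h <;> rw [h] <;> decide
      have hn1 : x (jj + 1 - 1) ≠ 0 := by
        have harr : jj + 1 - 1 = jj := by ring
        rw [harr]
        rcases hj13 with h | h <;> rw [h] <;> decide
      have hn2 : (fun _ : ℤ => (1:Fin 4)) (jj + 1 - 1) ≠ 0 := by
        show (1 : Fin 4) ≠ 0
        decide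
      exact glueA hx const1_mem_CharX (s := jj + 1) hn1 hn2 hseam
    · intro j hj
      exact if_pos (by omega)
    · intro j hj
      exact if_neg (by omega)
  · push_neg at hc1
    have hzero : ∀ j, m ≤ j → x j = 0 := by
      intro j hj
      rcases fin4_cases (x j) with h | h | h | h
      · exact h
      · exact absurd h (fun h' => (hc1 j hj).1 h')
      · exfalso
        have hpair := hx.1 j
        have key : ∀ u : Fin 4, allowedA 2 u = true → u = 3 := by decide
        have := key (x (j+1)) (by rw [← h]; exact hpair)
        exact (hc1 (j+1) (by omega)).2 this
      · exact absurd h (fun h' => (hc1 j hj).2 h')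
    by_cases hc2 : ∃ l, x l ≠ 0
    · have hbdd : ∃ b, ∀ z, x z ≠ 0 → z ≤ b := by
        refine ⟨m - 1, fun z hz => ?_⟩
        by_contra hzb
        exact hz (hzero z (by omega))
      obtain ⟨b, hb⟩ := hbdd
      obtain ⟨l₀, hl₀, hmax⟩ := Int.exists_greatest_of_bdd
        (P := fun l => x l ≠ 0) ⟨b, hb⟩ hc2
      have hl₀m : l₀ < m := by
        by_contra h
        exact hl₀ (hzero l₀ (by omega))
      obtain ⟨q, hqm, hodd⟩ : ∃ q, m < q ∧ Odd (q - l₀) := by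
        rcases Int.even_or_odd (m + 1 - l₀) with he | ho
        · exact ⟨m + 2, by omega, by
            rw [Int.odd_iff]
            rw [Int.even_iff] at he
            omega⟩
        · exact ⟨m + 1, by omega, ho⟩
      set z : ℤ → Fin 4 := fun j => if j < q then x j else 1 with hzdef
      have hz1 : ∀ j, j < q → z j = x j := fun j hj => if_pos hj
      have hz2 : ∀ j, q ≤ j → z j = 1 := fun j hj => if_neg (by omega)
      refine ⟨z, ⟨?_, ?_⟩, fun j hj => hz1 j (by omega), q, by omega, fun j hj => hz2 j (by omega)⟩
      · intro i
        rcases lt_or_ge (i+1) q with h | h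
        · rw [hz1 i (by omega), hz1 (i+1) h]; exact hx.1 i
        · rcases lt_or_ge i q with h' | h'
          · rw [hz1 i h', hz2 (i+1) h]
            rw [hzero i (by omega)]
            decide
          · rw [hz2 i h', hz2 (i+1) (by omega)]; decide
      · intro l r hlr hl hr hz
        rcases lt_or_ge r q with hrq | hrq
        · refine hx.2 l r hlr ?_ ?_ ?_
          · rw [← hz1 l (by omega)]; exact hl
          · rw [← hz1 r hrq]; exact hr
          · intro j hj1 hj2
            rw [← hz1 j (by omega)]; exact hz j hj1 hj2
        · rcases eq_or_lt_of_le hrq with rfl | hrq'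
          swap
          · -- r > q : then l ≥ q and the block is empty
            rcases lt_or_ge l q with hlq | hlq
            · exfalso
              have := hz q (by omega) (by omega)
              rw [hz2 q (le_refl q)] at this
              simp at this
            · rcases eq_or_lt_of_le (by omega : l + 1 ≤ r) with heq | hlt
              · rw [← heq]; simpa using odd_one_int
              · exfalso
                have := hz (l+1) (by omega) (by omega)
                rw [hz2 (l+1) (by omega)] at this
                simp at this
          · -- r = q
            have hlq : l = l₀ := by
              have hxl : x l ≠ 0 := by
                rw [← hz1 l (by omega)]; exact hl
              have hle : l ≤ l₀ := hmax l hxl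
              rcases eq_or_lt_of_le hle with heq | hlt
              · exact heq
              · exfalso
                have := hz l₀ hlt (by omega)
                rw [hz1 l₀ (by omega)] at this
                exact hl₀ this
            rw [hlq]
            exact hodd
    · -- x is identically zero
      push_neg at hc2
      set z : ℤ → Fin 4 := fun j => if j < m + 1 then x j else 1 with hzdef
      have hz1 : ∀ j, j < m + 1 → z j = x j := fun j hj => if_pos hj
      have hz2 : ∀ j, m + 1 ≤ j → z j = 1 := fun j hj => if_neg (by omega)
      refine ⟨z, ⟨?_, ?_⟩, fun j hj => hz1 j (by omega), m, le_refl m,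
        fun j hj => hz2 j (by omega)⟩
      · intro i
        rcases lt_or_ge (i+1) (m+1) with h | h
        · rw [hz1 i (by omega), hz1 (i+1) h, hc2 i, hc2 (i+1)]; decide
        · rcases lt_or_ge i (m+1) with h' | h'
          · rw [hz1 i h', hz2 (i+1) h, hc2 i]; decide
          · rw [hz2 i h', hz2 (i+1) (by omega)]; decide
      · intro l r hlr hl hr hz
        have hlm : m + 1 ≤ l := by
          by_contra h
          rw [hz1 l (by omega), hc2 l] at hl
          exact hl rfl
        rcases eq_or_lt_of_le (by omega : l + 1 ≤ r) with heq | hlt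
        · rw [← heq]; simpa using odd_one_int
        · exfalso
          have := hz (l+1) (by omega) (by omega)
          rw [hz2 (l+1) (by omega)] at this
          simp at this

end S12

namespace S12

lemma cut_left {x : ℤ → Fin 4} (hx : x ∈ CharX) (m : ℤ) :
    ∃ z ∈ CharX, (∀ j, m ≤ j → z j = x j) ∧ ∃ c, c ≤ m ∧ ∀ j, j < c → z j = (1 : Fin 4) := by
  classical
  by_cases hc1 : ∃ j, j ≤ m ∧ (x j = 1 ∨ x j = 2)
  · obtain ⟨jj, hjm, hj12⟩ := hc1
    refine ⟨fun j => if j < jj then 1 else x j, ?_, ?_, jj, hjm, ?_⟩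
    · have hseam : allowedA ((fun _ : ℤ => (1:Fin 4)) (jj - 1)) (x jj) = true := by
        show allowedA 1 (x jj) = true
        rcases hj12 with h | h <;> rw [h] <;> decide
      have hn1 : (fun _ : ℤ => (1:Fin 4)) jj ≠ 0 := by
        show (1 : Fin 4) ≠ 0
        decide
      have hn2 : x jj ≠ 0 := by
        rcases hj12 with h | h <;> rw [h] <;> decide
      exact glueB const1_mem_CharX hx (s := jj) hn1 hn2 hseam
    · intro j hj
      exact if_neg (by omega)
    · intro j hj
      exact if_pos hj
  · push_neg at hc1
    have hzero : ∀ j, j ≤ m → x j = 0 := by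
      intro j hj
      rcases fin4_cases (x j) with h | h | h | h
      · exact h
      · exact absurd h (fun h' => (hc1 j hj).1 h')
      · exact absurd h (fun h' => (hc1 j hj).2 h')
      · exfalso
        have hpair := hx.1 (j-1)
        have harr : j - 1 + 1 = j := by ring
        rw [harr, h] at hpair
        have key : ∀ s : Fin 4, allowedA s 3 = true → s = 2 := by decide
        have := key (x (j-1)) hpair
        exact (hc1 (j-1) (by omega)).2 this
    by_cases hc2 : ∃ r, x r ≠ 0
    · have hbdd : ∃ b, ∀ z, x z ≠ 0 → b ≤ z := by
        refine ⟨m + 1, fun z hz => ?_⟩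
        by_contra hzb
        exact hz (hzero z (by omega))
      obtain ⟨b, hb⟩ := hbdd
      obtain ⟨r₀, hr₀, hmin⟩ := Int.exists_least_of_bdd
        (P := fun r => x r ≠ 0) ⟨b, hb⟩ hc2
      have hr₀m : m < r₀ := by
        by_contra h
        exact hr₀ (hzero r₀ (by omega))
      obtain ⟨q, hqm, hodd⟩ : ∃ q, q < m ∧ Odd (r₀ - q) := by
        rcases Int.even_or_odd (r₀ - (m - 1)) with he | ho
        · exact ⟨m - 2, by omega, by
            rw [Int.odd_iff]
            rw [Int.even_iff] at he
            omega⟩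
        · exact ⟨m - 1, by omega, ho⟩
      set z : ℤ → Fin 4 := fun j => if j ≤ q then 1 else x j with hzdef
      have hz1 : ∀ j, j ≤ q → z j = 1 := fun j hj => if_pos hj
      have hz2 : ∀ j, q < j → z j = x j := fun j hj => if_neg (by omega)
      refine ⟨z, ⟨?_, ?_⟩, fun j hj => hz2 j (by omega), q + 1, by omega,
        fun j hj => hz1 j (by omega)⟩
      · intro i
        rcases lt_or_ge q i with h | h
        · rw [hz2 i h, hz2 (i+1) (by omega)]; exact hx.1 i
        · rcases lt_or_ge q (i+1) with h' | h'
          · have hiq : i = q := by omega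
            rw [hiq]
            rw [hz1 q (le_refl q), hz2 (q+1) (by omega)]
            rw [hzero (q+1) (by omega)]
            decide
          · rw [hz1 i h, hz1 (i+1) h']; decide
      · intro l r hlr hl hr hz
        rcases lt_or_ge q l with hlq | hlq
        · refine hx.2 l r hlr ?_ ?_ ?_
          · rw [← hz2 l hlq]; exact hl
          · rw [← hz2 r (by omega)]; exact hr
          · intro j hj1 hj2
            rw [← hz2 j (by omega)]; exact hz j hj1 hj2
        · rcases eq_or_lt_of_le hlq with heq | hlq'
          · -- l = q
            have hrr : r = r₀ := by
              have hxr : x r ≠ 0 := by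
                rw [← hz2 r (by omega)]; exact hr
              have hle : r₀ ≤ r := hmin r hxr
              rcases eq_or_lt_of_le hle with heq2 | hlt2
              · exact heq2.symm
              · exfalso
                have := hz r₀ (by omega) hlt2
                rw [hz2 r₀ (by omega)] at this
                exact hr₀ this
            rw [hrr, heq]
            exact hodd
          · -- l < q
            rcases eq_or_lt_of_le (by omega : l + 1 ≤ r) with heq | hlt
            · rw [← heq]; simpa using odd_one_int
            · exfalso
              rcases lt_or_ge q r with hqr | hqr
              · have := hz q (by omega) (by omega)
                rw [hz1 q (le_refl q)] at this
                simp at this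
              · have := hz (l+1) (by omega) (by omega)
                rw [hz1 (l+1) (by omega)] at this
                simp at this
    · push_neg at hc2
      set z : ℤ → Fin 4 := fun j => if j ≤ m - 1 then 1 else x j with hzdef
      have hz1 : ∀ j, j ≤ m - 1 → z j = 1 := fun j hj => if_pos hj
      have hz2 : ∀ j, m - 1 < j → z j = x j := fun j hj => if_neg (by omega)
      refine ⟨z, ⟨?_, ?_⟩, fun j hj => hz2 j (by omega), m - 1, by omega,
        fun j hj => hz1 j (by omega)⟩
      · intro i
        rcases lt_or_ge (m-1) i with h | h
        · rw [hz2 i h, hz2 (i+1) (by omega), hc2 i, hc2 (i+1)]; decide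
        · rcases lt_or_ge (m-1) (i+1) with h' | h'
          · have : i = m - 1 := by omega
            subst this
            rw [hz1 (m-1) (le_refl _), hz2 (m-1+1) (by omega), hc2 (m-1+1)]
            decide
          · rw [hz1 i h, hz1 (i+1) h']; decide
      · intro l r hlr hl hr hz
        have hrm : r ≤ m - 1 := by
          by_contra h
          rw [hz2 r (by omega), hc2 r] at hr
          exact hr rfl
        rcases eq_or_lt_of_le (by omega : l + 1 ≤ r) with heq | hlt
        · rw [← heq]; simpa using odd_one_int
        · exfalso
          have := hz (l+1) (by omega) (by omega)
          rw [hz1 (l+1) (by omega)] at this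
          simp at this

/-- every word of the language occurs in a point padded with 1s on both sides -/
lemma pad {u : List (Fin 4)} (hu : WordIn u CharX) :
    ∃ z ∈ CharX, OccursAt u z 0 ∧
      (∃ c : ℤ, c ≤ 0 ∧ ∀ j, j < c → z j = (1:Fin 4)) ∧
      (∃ d : ℤ, (u.length : ℤ) - 1 ≤ d ∧ ∀ j, d < j → z j = (1:Fin 4)) := by
  obtain ⟨x, hx, i, hocc⟩ := hu
  -- shift so that u occurs at 0
  set x' : ℤ → Fin 4 := fun j => x (j + i) with hx'def
  have hx' : x' ∈ CharX := shiftk_mem_CharX hx i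
  have hocc' : OccursAt u x' 0 := by
    have := occursAt_shiftk hocc i
    simpa using this
  -- cut on the right at (u.length - 1)
  obtain ⟨z₁, hz₁, hag₁, d, hd1, hd2⟩ := cut_right hx' ((u.length : ℤ) - 1)
  have hocc₁ : OccursAt u z₁ 0 := by
    refine occursAt_congr (fun j hj1 hj2 => ?_) hocc'
    exact hag₁ j (by omega)
  -- cut on the left at 0
  obtain ⟨z₂, hz₂, hag₂, c, hc1, hc2⟩ := cut_left hz₁ 0
  refine ⟨z₂, hz₂, ?_, ⟨c, hc1, hc2⟩, ⟨max d ((u.length:ℤ) - 1), le_max_right _ _, ?_⟩⟩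
  · refine occursAt_congr (fun j hj1 hj2 => ?_) hocc₁
    exact hag₂ j hj1
  · intro j hj
    rw [hag₂ j (by omega)]
    exact hd2 j (by omega)

end S12

namespace S12

lemma CharX_mixing : IsMixingShift CharX := by
  intro u v hu hv
  obtain ⟨zu, hzu, occu, ⟨cu, hcu0, hcu⟩, ⟨du, hdu1, hdu⟩⟩ := pad hu
  obtain ⟨zv, hzv, occv, ⟨cv, hcv0, hcv⟩, -⟩ := pad hv
  refine ⟨(du - (u.length:ℤ) - cv + 2).toNat + (-cv).toNat, ?_⟩
  intro n hn
  set L : ℤ := (u.length : ℤ) with hL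
  have hA : L + n + cv - 1 > du := by omega
  have hB : (n : ℤ) ≥ -cv := by omega
  set s : ℤ := L + n + cv with hs
  set z₂ : ℤ → Fin 4 := fun j => zv (j + (-(L + n))) with hz₂def
  have hz₂ : z₂ ∈ CharX := shiftk_mem_CharX hzv (-(L+n))
  have hzu_s1 : zu (s-1) = 1 := hdu (s-1) (by omega)
  have hz₂_s1 : z₂ (s-1) = 1 := by
    show zv (s - 1 + -(L+n)) = 1
    have harr : s - 1 + -(L + n) = cv - 1 := by rw [hs]; ring
    rw [harr]
    exact hcv (cv - 1) (by omega)
  have hz₂_s : z₂ s = zv cv := by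
    show zv (s + -(L+n)) = zv cv
    congr 1
    rw [hs]; ring
  have hseam : allowedA (zu (s-1)) (z₂ s) = true := by
    rw [hzu_s1, hz₂_s]
    have := hzv.1 (cv - 1)
    have harr : cv - 1 + 1 = cv := by ring
    rw [harr] at this
    rw [hcv (cv-1) (by omega)] at this
    exact this
  set P : ℤ → Fin 4 := fun j => if j < s then zu j else z₂ j with hPdef
  have hP : P ∈ CharX :=
    glueA hzu hz₂ (by rw [hzu_s1]; decide) (by rw [hz₂_s1]; decide) hseam
  have hP1 : ∀ j, j < s → P j = zu j := fun j hj => if_pos hj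
  have hP2 : ∀ j, s ≤ j → P j = z₂ j := fun j hj => if_neg (by omega)
  set w : List (Fin 4) := (List.range n).map (fun t : ℕ => P (L + (t:ℤ))) with hwdef
  have hwlen : w.length = n := by simp [hwdef]
  refine ⟨w, hwlen, P, hP, 0, ?_⟩
  have occu' : OccursAt u P 0 := by
    refine occursAt_congr (fun j hj1 hj2 => ?_) occu
    exact hP1 j (by omega)
  have occw : OccursAt w P (0 + (u.length:ℤ)) := by
    intro t
    have hlt : (t : ℕ) < n := by
      have h1 := t.2
      omega
    have hget : w.get t = P (L + ((t:ℕ):ℤ)) := by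
      simp [hwdef]
    rw [hget]
    congr 1
    rw [hL]; ring
  have occv0 : OccursAt v (fun j => zv (j + (-(L+n)))) (0 - (-(L+n))) :=
    occursAt_shiftk occv (-(L+n))
  have occv' : OccursAt v P (0 + ((u ++ w).length : ℤ)) := by
    have harr : (0 : ℤ) - (-(L+n)) = 0 + ((u ++ w).length : ℤ) := by
      simp [List.length_append, hwlen, hL]
    rw [harr] at occv0
    refine occursAt_congr (fun j hj1 hj2 => ?_) occv0
    have hjs : s ≤ j := by
      have : (0:ℤ) + ((u++w).length : ℤ) = L + n := by
        simp [List.length_append, hwlen, hL]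
      omega
    exact hP2 j hjs
  exact occursAt_append (occursAt_append occu' occw) occv'

end S12

namespace S12

def zeroPt : ℤ → Fin 4 := fun _ => 0

lemma zeroPt_mem : zeroPt ∈ CharX := by
  constructor
  · intro i; show allowedA 0 0 = true; decide
  · intro l r hlr hl hr hz
    exact absurd rfl hl

noncomputable def qPt : ℤ → Fin 4 := fun j => if Even j then 2 else 3

lemma qPt_ne0 (j : ℤ) : qPt j ≠ 0 := by
  rw [qPt]; split <;> decide

lemma qPt_mem : qPt ∈ CharX := by
  constructor
  · intro i
    have he : Even (i+1) ↔ ¬ Even i := Int.even_add_one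
    by_cases h : Even i
    · simp only [qPt]
      rw [if_pos h, if_neg (by rw [he]; exact fun hc => hc h)]
      decide
    · simp only [qPt]
      rw [if_neg h, if_pos (he.mpr h)]
      decide
  · intro l r hlr hl hr hz
    rcases eq_or_lt_of_le (by omega : l + 1 ≤ r) with heq | hlt
    · rw [← heq]; simpa using odd_one_int
    · exact absurd (hz (l+1) (by omega) (by omega)) (qPt_ne0 (l+1))

def xp (n : ℕ) : ℤ → Fin 4 := fun j => if j = 2*(n:ℤ) then 1 else 0

lemma xp_ne0 {n : ℕ} {j : ℤ} (h : xp n j ≠ 0) : j = 2*(n:ℤ) := by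
  by_contra hne
  rw [xp] at h
  rw [if_neg hne] at h
  exact h rfl

lemma xp_at {n : ℕ} : xp n (2*(n:ℤ)) = 1 := if_pos rfl

lemma xp_mem (n : ℕ) : xp n ∈ CharX := by
  constructor
  · intro i
    by_cases h : i = 2*(n:ℤ)
    · simp only [xp]
      rw [if_pos h, if_neg (by omega)]; decide
    · by_cases h' : i + 1 = 2*(n:ℤ)
      · simp only [xp]
        rw [if_neg h, if_pos h']; decide
      · simp only [xp]
        rw [if_neg h, if_neg h']; decide
  · intro l r hlr hl hr hz
    have h1 := xp_ne0 hl
    have h2 := xp_ne0 hr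
    omega

lemma xp_aper (n : ℕ) : ¬ TPeriodic (xp n) := by
  rintro ⟨k, hk1, hk⟩
  have := congrFun hk (2*(n:ℤ))
  rw [tshift_iter, xp_at] at this
  have : (2*(n:ℤ) + k) = 2*(n:ℤ) := by
    by_contra hne
    rw [xp, if_neg hne] at this
    exact absurd this (by decide)
  omega

lemma xp_F0 {n : ℕ} {j : ℤ} (hj : j < 2*(n:ℤ)) : F0 (xp n) j = qPt j := by
  have h0 : xp n j = 0 := by
    rw [xp, if_neg (by omega)]
  have hrB : rB (xp n) j (2*(n:ℤ)) := by
    refine ⟨hj, by rw [xp_at]; decide, ?_⟩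
    intro i hi1 hi2
    rw [xp, if_neg (by omega)]
  have hnoL : ¬ ∃ l, lB (xp n) j l := by
    rintro ⟨l, hl1, hl2, hl3⟩
    have := xp_ne0 hl2
    omega
  rw [F0_at0 h0, specR hnoL hrB, qPt]
  have hiff : Even (2*(n:ℤ) - j) ↔ Even j := by
    rw [Int.even_iff, Int.even_iff]; omega
  by_cases h : Even j
  · rw [if_pos ((decide_eq_true_eq).mpr (hiff.mpr h)), if_pos h]
  · rw [if_neg (by simp only [decide_eq_true_eq]; exact fun hc => h (hiff.mp hc)), if_neg h]

noncomputable def Phi : (Aper CharX) → (Aper CharX) :=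
  fun x => ⟨F0 (x : ℤ → Fin 4), F0_mem_aper x.2⟩

noncomputable def fprime : (Aper CharX) ≃ₜ (Aper CharX) where
  toFun := Phi
  invFun := Phi
  left_inv := fun x => Subtype.ext (F0_invol x.2.1 x.2.2)
  right_inv := fun x => Subtype.ext (F0_invol x.2.1 x.2.2)
  continuous_toFun := Continuous.subtype_mk F0_continuous _
  continuous_invFun := Continuous.subtype_mk F0_continuous _

lemma fprime_commuting : ShiftCommuting2 (⇑fprime : Aper CharX → Aper CharX) := by
  intro x hx
  show F0 (tshift (x : ℤ → Fin 4)) = tshift (F0 (x : ℤ → Fin 4))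
  exact F0_shift (aper_nonzero x.2.2)

end S12

namespace S12

lemma tshift_zeroPt : tshift zeroPt = zeroPt := rfl

lemma xp_tendsto : Filter.Tendsto (fun n : ℕ => xp n) Filter.atTop (nhds zeroPt) := by
  rw [tendsto_pi_nhds]
  intro i
  refine Filter.Tendsto.congr' ?_ tendsto_const_nhds
  rw [Filter.eventuallyEq_iff_exists_mem]
  refine ⟨{n : ℕ | i.natAbs + 1 ≤ n}, Filter.mem_atTop _, ?_⟩
  intro n hn
  show zeroPt i = xp n i
  have h1 : (i.natAbs : ℤ) + 1 ≤ n := by exact_mod_cast hn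
  have h2 : i ≤ (i.natAbs : ℤ) := Int.le_natAbs
  simp only [zeroPt, xp]
  rw [if_neg (by omega)]

lemma F0xp_tendsto : Filter.Tendsto (fun n : ℕ => F0 (xp n)) Filter.atTop (nhds qPt) := by
  rw [tendsto_pi_nhds]
  intro i
  refine Filter.Tendsto.congr' ?_ tendsto_const_nhds
  rw [Filter.eventuallyEq_iff_exists_mem]
  refine ⟨{n : ℕ | i.natAbs + 1 ≤ n}, Filter.mem_atTop _, ?_⟩
  intro n hn
  show qPt i = F0 (xp n) i
  refine (xp_F0 ?_).symm
  have h1 : (i.natAbs : ℤ) + 1 ≤ n := by exact_mod_cast hn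
  have h2 : i ≤ (i.natAbs : ℤ) := Int.le_natAbs
  omega

theorem no_extension :
    ¬ ∃ f : CharX ≃ₜ CharX, ShiftCommuting2 ⇑f ∧
      RestrictsTo2 ⇑f (⇑fprime : Aper CharX → Aper CharX) := by
  rintro ⟨f, hc, hr⟩
  set zp : CharX := ⟨zeroPt, zeroPt_mem⟩ with hzp
  have hxpm : ∀ n : ℕ, xp n ∈ Aper CharX := fun n => ⟨xp_mem n, xp_aper n⟩
  -- the sequence tends to the zero point inside the subtype
  have t1 : Filter.Tendsto (fun n : ℕ => (⟨xp n, (hxpm n).1⟩ : CharX))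
      Filter.atTop (nhds zp) := by
    rw [tendsto_subtype_rng]
    exact xp_tendsto
  have t2 : Filter.Tendsto (fun n : ℕ => f (⟨xp n, (hxpm n).1⟩ : CharX))
      Filter.atTop (nhds (f zp)) := (f.continuous.tendsto zp).comp t1
  have t3 : Filter.Tendsto (fun n : ℕ => (f (⟨xp n, (hxpm n).1⟩ : CharX) : ℤ → Fin 4))
      Filter.atTop (nhds (f zp : ℤ → Fin 4)) :=
    ((continuous_subtype_val.tendsto _).comp t2)
  have hval : ∀ n : ℕ, (f (⟨xp n, (hxpm n).1⟩ : CharX) : ℤ → Fin 4) = F0 (xp n) := by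
    intro n
    have := hr (xp n) (hxpm n)
    rw [this]
    rfl
  have t3' : Filter.Tendsto (fun n : ℕ => F0 (xp n))
      Filter.atTop (nhds (f zp : ℤ → Fin 4)) := by
    refine t3.congr ?_
    intro n
    exact hval n
  have hq : (f zp : ℤ → Fin 4) = qPt := tendsto_nhds_unique t3' F0xp_tendsto
  -- but the image of the fixed point must be shift-invariant
  have hfix : (f zp : ℤ → Fin 4) = tshift (f zp : ℤ → Fin 4) := by
    have hmem : tshift zeroPt ∈ CharX := by rw [tshift_zeroPt]; exact zeroPt_mem
    have := hc zp hmem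
    have heq : (⟨tshift zeroPt, hmem⟩ : CharX) = zp := Subtype.ext tshift_zeroPt
    rw [heq] at this
    exact this
  rw [hq] at hfix
  have h0 := congrFun hfix (0:ℤ)
  have e1 : qPt 0 = 2 := by
    simp only [qPt]
    rw [if_pos (by rw [Int.even_iff]; norm_num : Even (0:ℤ))]
  have e2 : tshift qPt 0 = qPt 1 := rfl
  have e3 : qPt 1 = 3 := by
    simp only [qPt]
    rw [if_neg (by rw [Int.even_iff]; omega)]
  rw [e1, e2, e3] at h0
  exact absurd h0 (by decide)

end S12


/-- There is a two-sided mixing sofic shift `X` (over some finite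
alphabet, wlog `Fin n`) and a topological conjugacy `f' : X' → X'` that is not the
restriction of any topological conjugacy `f : X → X`. -/
theorem statement12 :
    ∃ (n : ℕ) (X : Set (ℤ → Fin n)), IsSoficShift X ∧ IsMixingShift X ∧
      ∃ f' : Aper X ≃ₜ Aper X, ShiftCommuting2 ⇑f' ∧
        ¬ ∃ f : X ≃ₜ X, ShiftCommuting2 ⇑f ∧ RestrictsTo2 ⇑f ⇑f' := by
  exact ⟨4, S12.CharX, S12.CharX_sofic, S12.CharX_mixing, S12.fprime,
    S12.fprime_commuting, S12.no_extension⟩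
end
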